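/- arXiv:2011.14110 — 9 statements merged into one kernel-verified Lean document; each statement's English description precedes it below -/
import Mathlib

section
/- Let X₁ and X₂ be disjoint nonempty sets whose union has at least three elements, and let d₁ : X₁ × X₁ → [0,∞) and d₂ : X₂ × X₂ → [0,∞) be strong b-metrics with relaxation constants K₁ ≥ 1 and K₂ ≥ 1 respectively, with finite diameters r₁ := diam_{d₁}(X₁) < ∞ and r₂ := diam_{d₂}(X₂) < ∞. Then there exists a function d : X × X → [0,∞) on X := X₁ ∪ X₂ extending both d₁ and d₂ (i.e., d agrees with dᵢ on Xᵢ × Xᵢ for i = 1,2) which is a strong b-metric on X with relaxation constant K := max{K₁, K₂} and satisfies diam_d(X) = max{r₁, r₂}. (The extension can be taken to be d(x,y) = max{r₁,r₂}/(1+K) whenever x, y lie in different components.) -/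
/-- A semimetric on a set `X`: nonnegative, vanishing exactly on the diagonal, symmetric. -/
def IsSemimetricOn {α : Type} (X : Set α) (d : α → α → ℝ) : Prop :=
  (∀ x ∈ X, ∀ y ∈ X, 0 ≤ d x y) ∧
  (∀ x ∈ X, ∀ y ∈ X, (d x y = 0 ↔ x = y)) ∧
  (∀ x ∈ X, ∀ y ∈ X, d x y = d y x)

/-- A strong b-metric on `X` with relaxation constant `K`. -/
def IsStrongBMetricOn {α : Type} (X : Set α) (d : α → α → ℝ) (K : ℝ) : Prop :=
  IsSemimetricOn X d ∧ 1 ≤ K ∧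
    ∀ x ∈ X, ∀ y ∈ X, ∀ z ∈ X, d x z ≤ K * d x y + d y z

/-- A b-metric on `X` with relaxation constant `K`. -/
def IsBMetricOn {α : Type} (X : Set α) (d : α → α → ℝ) (K : ℝ) : Prop :=
  IsSemimetricOn X d ∧ 1 ≤ K ∧
    ∀ x ∈ X, ∀ y ∈ X, ∀ z ∈ X, d x z ≤ K * (d x y + d y z)

/-- A metric on `X`. -/
def IsMetricOn {α : Type} (X : Set α) (d : α → α → ℝ) : Prop :=
  IsSemimetricOn X d ∧
    ∀ x ∈ X, ∀ y ∈ X, ∀ z ∈ X, d x z ≤ d x y + d y z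

/-- The set of distances realized on `X`; its `sSup` is the diameter. -/
def distSet {α : Type} (X : Set α) (d : α → α → ℝ) : Set ℝ :=
  {r : ℝ | ∃ x ∈ X, ∃ y ∈ X, d x y = r}

/-- `(X, d)` satisfies the `K`-relaxed polygonal inequality. -/
def SatisfiesRPI {α : Type} (X : Set α) (d : α → α → ℝ) (K : ℝ) : Prop :=
  ∀ n : ℕ, ∀ x : ℕ → α, (∀ i ≤ n, x i ∈ X) →
    d (x 0) (x n) ≤ K * ∑ i ∈ Finset.range n, d (x i) (x (i + 1))

/-- `(a,b,c)` with `a ≥ b ≥ c ≥ 0` is a `K`-triangle triplet: `a ≤ K (b + c)`. -/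
def IsTriangleTriplet (K a b c : ℝ) : Prop :=
  b ≤ a ∧ c ≤ b ∧ 0 ≤ c ∧ a ≤ K * (b + c)

/-- `(a,b,c)` with `a ≥ b ≥ c ≥ 0` is a strong `K`-triangle triplet: `a ≤ K c + b`. -/
def IsStrongTriangleTriplet (K a b c : ℝ) : Prop :=
  b ≤ a ∧ c ≤ b ∧ 0 ≤ c ∧ a ≤ K * c + b

/-- The values `x, y, z` can be arranged into a `K`-triangle triplet. -/
def FormsTriangleTriplet (K x y z : ℝ) : Prop :=
  ∃ a b c : ℝ, ({a, b, c} : Multiset ℝ) = ({x, y, z} : Multiset ℝ) ∧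
    IsTriangleTriplet K a b c

/-- The values `x, y, z` can be arranged into a strong `K`-triangle triplet. -/
def FormsStrongTriangleTriplet (K x y z : ℝ) : Prop :=
  ∃ a b c : ℝ, ({a, b, c} : Multiset ℝ) = ({x, y, z} : Multiset ℝ) ∧
    IsStrongTriangleTriplet K a b c

/-- Concatenation lemma for strong b-metric spaces. -/
theorem concatenation_strong_bmetric {α : Type} (X₁ X₂ : Set α) (d₁ d₂ : α → α → ℝ)
    (K₁ K₂ : ℝ)
    (hne₁ : X₁.Nonempty) (hne₂ : X₂.Nonempty) (hdisj : Disjoint X₁ X₂)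
    (hthree : ∃ p ∈ X₁ ∪ X₂, ∃ q ∈ X₁ ∪ X₂, ∃ r ∈ X₁ ∪ X₂, p ≠ q ∧ p ≠ r ∧ q ≠ r)
    (h₁ : IsStrongBMetricOn X₁ d₁ K₁) (h₂ : IsStrongBMetricOn X₂ d₂ K₂)
    (hb₁ : BddAbove (distSet X₁ d₁)) (hb₂ : BddAbove (distSet X₂ d₂)) :
    ∃ d : α → α → ℝ,
      (∀ x ∈ X₁, ∀ y ∈ X₁, d x y = d₁ x y) ∧
      (∀ x ∈ X₂, ∀ y ∈ X₂, d x y = d₂ x y) ∧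
      (∀ x ∈ X₁, ∀ y ∈ X₂,
        d x y = max (sSup (distSet X₁ d₁)) (sSup (distSet X₂ d₂)) / (1 + max K₁ K₂)) ∧
      IsStrongBMetricOn (X₁ ∪ X₂) d (max K₁ K₂) ∧
      sSup (distSet (X₁ ∪ X₂) d) = max (sSup (distSet X₁ d₁)) (sSup (distSet X₂ d₂)) := by
  classical
  obtain ⟨⟨hnn₁, hzero₁, hsymm₁⟩, hK₁, htri₁⟩ := h₁
  obtain ⟨⟨hnn₂, hzero₂, hsymm₂⟩, hK₂, htri₂⟩ := h₂
  set r₁ := sSup (distSet X₁ d₁) with hr₁def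
  set r₂ := sSup (distSet X₂ d₂) with hr₂def
  set K := max K₁ K₂ with hKdef
  have hKK₁ : K₁ ≤ K := le_max_left _ _
  have hKK₂ : K₂ ≤ K := le_max_right _ _
  have hK1 : 1 ≤ K := le_trans hK₁ hKK₁
  set R := max r₁ r₂ with hRdef
  set ρ := R / (1 + K) with hρdef
  obtain ⟨a₁, ha₁⟩ := hne₁
  obtain ⟨a₂, ha₂⟩ := hne₂
  have hmem : ∀ x, x ∈ X₁ → x ∉ X₂ := fun x hx => Set.disjoint_left.mp hdisj hx
  have hd₁le : ∀ x ∈ X₁, ∀ y ∈ X₁, d₁ x y ≤ r₁ := fun x hx y hy =>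
    le_csSup hb₁ ⟨x, hx, y, hy, rfl⟩
  have hd₂le : ∀ x ∈ X₂, ∀ y ∈ X₂, d₂ x y ≤ r₂ := fun x hx y hy =>
    le_csSup hb₂ ⟨x, hx, y, hy, rfl⟩
  have hr₁0 : 0 ≤ r₁ := by
    have := hd₁le a₁ ha₁ a₁ ha₁
    have h0 := (hzero₁ a₁ ha₁ a₁ ha₁).mpr rfl
    linarith
  have hr₂0 : 0 ≤ r₂ := by
    have := hd₂le a₂ ha₂ a₂ ha₂
    have h0 := (hzero₂ a₂ ha₂ a₂ ha₂).mpr rfl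
    linarith
  have hR0 : 0 ≤ R := le_trans hr₁0 (le_max_left _ _)
  have hr₁R : r₁ ≤ R := le_max_left _ _
  have hr₂R : r₂ ≤ R := le_max_right _ _
  have hRpos : 0 < R := by
    have key : (∃ u ∈ X₁, ∃ v ∈ X₁, u ≠ v) ∨ (∃ u ∈ X₂, ∃ v ∈ X₂, u ≠ v) := by
      obtain ⟨p, hp, q, hq, r, hr, hpq, hpr, hqr⟩ := hthree
      rcases hp with hp | hp <;> rcases hq with hq | hq <;> rcases hr with hr | hr
      · exact Or.inl ⟨p, hp, q, hq, hpq⟩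
      · exact Or.inl ⟨p, hp, q, hq, hpq⟩
      · exact Or.inl ⟨p, hp, r, hr, hpr⟩
      · exact Or.inr ⟨q, hq, r, hr, hqr⟩
      · exact Or.inl ⟨q, hq, r, hr, hqr⟩
      · exact Or.inr ⟨p, hp, r, hr, hpr⟩
      · exact Or.inr ⟨p, hp, q, hq, hpq⟩
      · exact Or.inr ⟨p, hp, q, hq, hpq⟩
    rcases key with ⟨u, hu, v, hv, huv⟩ | ⟨u, hu, v, hv, huv⟩
    · have h1 : 0 ≤ d₁ u v := hnn₁ u hu v hv
      have h2 : d₁ u v ≠ 0 := fun h => huv ((hzero₁ u hu v hv).mp h)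
      have := hd₁le u hu v hv
      have : 0 < d₁ u v := lt_of_le_of_ne h1 (Ne.symm h2)
      linarith [hd₁le u hu v hv]
    · have h1 : 0 ≤ d₂ u v := hnn₂ u hu v hv
      have h2 : d₂ u v ≠ 0 := fun h => huv ((hzero₂ u hu v hv).mp h)
      have : 0 < d₂ u v := lt_of_le_of_ne h1 (Ne.symm h2)
      linarith [hd₂le u hu v hv]
  have h1K : (0:ℝ) < 1 + K := by linarith
  have hρ0 : 0 < ρ := div_pos hRpos h1K
  have hRρ : R = (1 + K) * ρ := by
    rw [hρdef]; field_simp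
  have hρR : ρ ≤ R := by
    rw [hρdef]; exact div_le_self hR0 (by linarith)
  set d : α → α → ℝ := fun x y =>
    if x ∈ X₁ ∧ y ∈ X₁ then d₁ x y else if x ∈ X₂ ∧ y ∈ X₂ then d₂ x y else ρ with hddef
  have hd11 : ∀ x ∈ X₁, ∀ y ∈ X₁, d x y = d₁ x y := fun x hx y hy => if_pos ⟨hx, hy⟩
  have hd22 : ∀ x ∈ X₂, ∀ y ∈ X₂, d x y = d₂ x y := by
    intro x hx y hy
    show (if _ then _ else _) = _
    rw [if_neg (fun h => hmem x h.1 hx), if_pos ⟨hx, hy⟩]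
  have hd12 : ∀ x ∈ X₁, ∀ y ∈ X₂, d x y = ρ := by
    intro x hx y hy
    show (if _ then _ else _) = _
    rw [if_neg (fun h => hmem y h.2 hy), if_neg (fun h => hmem x hx h.1)]
  have hd21 : ∀ x ∈ X₂, ∀ y ∈ X₁, d x y = ρ := by
    intro x hx y hy
    show (if _ then _ else _) = _
    rw [if_neg (fun h => hmem x h.1 hx), if_neg (fun h => hmem y hy h.2)]
  refine ⟨d, hd11, hd22, hd12, ⟨⟨?_, ?_, ?_⟩, hK1, ?_⟩, ?_⟩
  · -- nonneg
    rintro x (hx | hx) y (hy | hy)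
    · rw [hd11 x hx y hy]; exact hnn₁ x hx y hy
    · rw [hd12 x hx y hy]; linarith
    · rw [hd21 x hx y hy]; linarith
    · rw [hd22 x hx y hy]; exact hnn₂ x hx y hy
  · -- zero iff
    rintro x (hx | hx) y (hy | hy)
    · rw [hd11 x hx y hy]; exact hzero₁ x hx y hy
    · rw [hd12 x hx y hy]
      constructor
      · intro h; exact absurd h (ne_of_gt hρ0)
      · intro h; exact absurd (h ▸ hx) (fun h' => hmem x h' (h ▸ hy))
    · rw [hd21 x hx y hy]
      constructor
      · intro h; exact absurd h (ne_of_gt hρ0)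
      · intro h; exact absurd (h ▸ hy) (fun h' => hmem y h' (h ▸ hx))
    · rw [hd22 x hx y hy]; exact hzero₂ x hx y hy
  · -- symm
    rintro x (hx | hx) y (hy | hy)
    · rw [hd11 x hx y hy, hd11 y hy x hx]; exact hsymm₁ x hx y hy
    · rw [hd12 x hx y hy, hd21 y hy x hx]
    · rw [hd21 x hx y hy, hd12 y hy x hx]
    · rw [hd22 x hx y hy, hd22 y hy x hx]; exact hsymm₂ x hx y hy
  · -- strong triangle
    rintro x (hx | hx) y (hy | hy) z (hz | hz)
    · rw [hd11 x hx y hy, hd11 y hy z hz, hd11 x hx z hz]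
      have := htri₁ x hx y hy z hz
      have h0 := hnn₁ x hx y hy
      nlinarith
    · rw [hd11 x hx y hy, hd12 y hy z hz, hd12 x hx z hz]
      nlinarith [hnn₁ x hx y hy]
    · rw [hd12 x hx y hy, hd21 y hy z hz, hd11 x hx z hz]
      have := hd₁le x hx z hz
      nlinarith
    · rw [hd12 x hx y hy, hd22 y hy z hz, hd12 x hx z hz]
      nlinarith [hnn₂ y hy z hz]
    · rw [hd21 x hx y hy, hd11 y hy z hz, hd21 x hx z hz]
      nlinarith [hnn₁ y hy z hz]
    · rw [hd21 x hx y hy, hd12 y hy z hz, hd22 x hx z hz]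
      have := hd₂le x hx z hz
      nlinarith
    · rw [hd22 x hx y hy, hd21 y hy z hz, hd21 x hx z hz]
      nlinarith [hnn₂ x hx y hy]
    · rw [hd22 x hx y hy, hd22 y hy z hz, hd22 x hx z hz]
      have := htri₂ x hx y hy z hz
      have h0 := hnn₂ x hx y hy
      nlinarith
  · -- diameter
    have hub : ∀ r ∈ distSet (X₁ ∪ X₂) d, r ≤ R := by
      rintro r ⟨x, hx, y, hy, rfl⟩
      rcases hx with hx | hx <;> rcases hy with hy | hy
      · rw [hd11 x hx y hy]; exact le_trans (hd₁le x hx y hy) hr₁R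
      · rw [hd12 x hx y hy]; exact hρR
      · rw [hd21 x hx y hy]; exact hρR
      · rw [hd22 x hx y hy]; exact le_trans (hd₂le x hx y hy) hr₂R
    have hne : (distSet (X₁ ∪ X₂) d).Nonempty :=
      ⟨d a₁ a₁, a₁, Or.inl ha₁, a₁, Or.inl ha₁, rfl⟩
    have hbd : BddAbove (distSet (X₁ ∪ X₂) d) := ⟨R, hub⟩
    apply le_antisymm
    · exact csSup_le hne hub
    · apply max_le
      · rw [hr₁def]
        refine csSup_le_csSup hbd ?_ ?_
        · exact ⟨0, a₁, ha₁, a₁, ha₁, (hzero₁ a₁ ha₁ a₁ ha₁).mpr rfl⟩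
        · rintro r ⟨x, hx, y, hy, rfl⟩
          exact ⟨x, Or.inl hx, y, Or.inl hy, hd11 x hx y hy⟩
      · rw [hr₂def]
        refine csSup_le_csSup hbd ?_ ?_
        · exact ⟨0, a₂, ha₂, a₂, ha₂, (hzero₂ a₂ ha₂ a₂ ha₂).mpr rfl⟩
        · rintro r ⟨x, hx, y, hy, rfl⟩
          exact ⟨x, Or.inr hx, y, Or.inr hy, hd22 x hx y hy⟩
end

section
/- Let X₁ and X₂ be disjoint nonempty sets whose union has at least three elements, and let d₁ : X₁ × X₁ → [0,∞) and d₂ : X₂ × X₂ → [0,∞) be b-metrics with relaxation constants K₁ ≥ 1 and K₂ ≥ 1 respectively, with finite diameters r₁ := diam_{d₁}(X₁) < ∞ and r₂ := diam_{d₂}(X₂) < ∞. Then there exists a function d : X × X → [0,∞) on X := X₁ ∪ X₂ extending both d₁ and d₂ which is a b-metric on X with relaxation constant K := max{K₁, K₂} and satisfies diam_d(X) = max{r₁, r₂}. -/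
open Classical in
/-- Glue two distance functions with constant cross-distance `c`. -/
noncomputable def glueDist {α : Type} (X₁ X₂ : Set α) (d₁ d₂ : α → α → ℝ) (c : ℝ) :
    α → α → ℝ :=
  fun x y => if x ∈ X₁ ∧ y ∈ X₁ then d₁ x y else if x ∈ X₂ ∧ y ∈ X₂ then d₂ x y else c

/-- Concatenation lemma for b-metric spaces. -/
theorem concatenation_bmetric {α : Type} (X₁ X₂ : Set α) (d₁ d₂ : α → α → ℝ)
    (K₁ K₂ : ℝ)
    (hne₁ : X₁.Nonempty) (hne₂ : X₂.Nonempty) (hdisj : Disjoint X₁ X₂)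
    (hthree : ∃ p ∈ X₁ ∪ X₂, ∃ q ∈ X₁ ∪ X₂, ∃ r ∈ X₁ ∪ X₂, p ≠ q ∧ p ≠ r ∧ q ≠ r)
    (h₁ : IsBMetricOn X₁ d₁ K₁) (h₂ : IsBMetricOn X₂ d₂ K₂)
    (hb₁ : BddAbove (distSet X₁ d₁)) (hb₂ : BddAbove (distSet X₂ d₂)) :
    ∃ d : α → α → ℝ,
      (∀ x ∈ X₁, ∀ y ∈ X₁, d x y = d₁ x y) ∧
      (∀ x ∈ X₂, ∀ y ∈ X₂, d x y = d₂ x y) ∧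
      IsBMetricOn (X₁ ∪ X₂) d (max K₁ K₂) ∧
      sSup (distSet (X₁ ∪ X₂) d) = max (sSup (distSet X₁ d₁)) (sSup (distSet X₂ d₂)) := by
  classical
  obtain ⟨⟨h₁0, h₁e, h₁s⟩, hK₁, h₁t⟩ := h₁
  obtain ⟨⟨h₂0, h₂e, h₂s⟩, hK₂, h₂t⟩ := h₂
  set r₁ := sSup (distSet X₁ d₁) with hr₁def
  set r₂ := sSup (distSet X₂ d₂) with hr₂def
  set c := max r₁ r₂ with hcdef
  have hd12 : ∀ a ∈ X₁, a ∉ X₂ := fun a ha => Set.disjoint_left.mp hdisj ha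
  have hd21 : ∀ a ∈ X₂, a ∉ X₁ := fun a ha => Set.disjoint_right.mp hdisj ha
  have hle₁ : ∀ x ∈ X₁, ∀ y ∈ X₁, d₁ x y ≤ r₁ :=
    fun x hx y hy => le_csSup hb₁ ⟨x, hx, y, hy, rfl⟩
  have hle₂ : ∀ x ∈ X₂, ∀ y ∈ X₂, d₂ x y ≤ r₂ :=
    fun x hx y hy => le_csSup hb₂ ⟨x, hx, y, hy, rfl⟩
  have hcpos : 0 < c := by
    obtain ⟨p, hp, q, hq, r, hr, hpq, hpr, hqr⟩ := hthree
    have key : ∃ u v, u ≠ v ∧ ((u ∈ X₁ ∧ v ∈ X₁) ∨ (u ∈ X₂ ∧ v ∈ X₂)) := by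
      rcases hp with hp | hp <;> rcases hq with hq | hq <;> rcases hr with hr | hr
      · exact ⟨p, q, hpq, Or.inl ⟨hp, hq⟩⟩
      · exact ⟨p, q, hpq, Or.inl ⟨hp, hq⟩⟩
      · exact ⟨p, r, hpr, Or.inl ⟨hp, hr⟩⟩
      · exact ⟨q, r, hqr, Or.inr ⟨hq, hr⟩⟩
      · exact ⟨q, r, hqr, Or.inl ⟨hq, hr⟩⟩
      · exact ⟨p, r, hpr, Or.inr ⟨hp, hr⟩⟩
      · exact ⟨p, q, hpq, Or.inr ⟨hp, hq⟩⟩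
      · exact ⟨p, q, hpq, Or.inr ⟨hp, hq⟩⟩
    obtain ⟨u, v, huv, h | h⟩ := key
    · have h0 : 0 < d₁ u v :=
        lt_of_le_of_ne (h₁0 u h.1 v h.2) (fun e => huv ((h₁e u h.1 v h.2).mp e.symm))
      exact lt_of_lt_of_le h0 (le_trans (hle₁ u h.1 v h.2) (le_max_left _ _))
    · have h0 : 0 < d₂ u v :=
        lt_of_le_of_ne (h₂0 u h.1 v h.2) (fun e => huv ((h₂e u h.1 v h.2).mp e.symm))
      exact lt_of_lt_of_le h0 (le_trans (hle₂ u h.1 v h.2) (le_max_right _ _))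
  set d := glueDist X₁ X₂ d₁ d₂ c with hddef
  have e11 : ∀ x ∈ X₁, ∀ y ∈ X₁, d x y = d₁ x y := by
    intro x hx y hy
    simp only [hddef, glueDist]
    rw [if_pos ⟨hx, hy⟩]
  have e22 : ∀ x ∈ X₂, ∀ y ∈ X₂, d x y = d₂ x y := by
    intro x hx y hy
    simp only [hddef, glueDist]
    rw [if_neg (fun h => hd21 x hx h.1), if_pos ⟨hx, hy⟩]
  have e12 : ∀ x ∈ X₁, ∀ y ∈ X₂, d x y = c := by
    intro x hx y hy
    simp only [hddef, glueDist]
    rw [if_neg (fun h => hd21 y hy h.2), if_neg (fun h => hd12 x hx h.1)]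
  have e21 : ∀ x ∈ X₂, ∀ y ∈ X₁, d x y = c := by
    intro x hx y hy
    simp only [hddef, glueDist]
    rw [if_neg (fun h => hd21 x hx h.1), if_neg (fun h => hd12 y hy h.2)]
  have hK : (1:ℝ) ≤ max K₁ K₂ := le_trans hK₁ (le_max_left _ _)
  refine ⟨d, e11, e22, ⟨⟨?_, ?_, ?_⟩, hK, ?_⟩, ?_⟩
  · -- nonnegativity
    rintro x (hx | hx) y (hy | hy)
    · rw [e11 x hx y hy]; exact h₁0 x hx y hy
    · rw [e12 x hx y hy]; exact hcpos.le
    · rw [e21 x hx y hy]; exact hcpos.le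
    · rw [e22 x hx y hy]; exact h₂0 x hx y hy
  · -- zero iff eq
    rintro x (hx | hx) y (hy | hy)
    · rw [e11 x hx y hy]; exact h₁e x hx y hy
    · rw [e12 x hx y hy]
      exact ⟨fun h => absurd h hcpos.ne', fun h => absurd (h ▸ hy) (hd12 x hx)⟩
    · rw [e21 x hx y hy]
      exact ⟨fun h => absurd h hcpos.ne', fun h => absurd (h ▸ hy) (hd21 x hx)⟩
    · rw [e22 x hx y hy]; exact h₂e x hx y hy
  · -- symmetry
    rintro x (hx | hx) y (hy | hy)
    · rw [e11 x hx y hy, e11 y hy x hx]; exact h₁s x hx y hy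
    · rw [e12 x hx y hy, e21 y hy x hx]
    · rw [e21 x hx y hy, e12 y hy x hx]
    · rw [e22 x hx y hy, e22 y hy x hx]; exact h₂s x hx y hy
  · -- triangle
    rintro x (hx | hx) y (hy | hy) z (hz | hz)
    · rw [e11 x hx y hy, e11 y hy z hz, e11 x hx z hz]
      have := h₁t x hx y hy z hz
      have n1 := h₁0 x hx y hy
      have n2 := h₁0 y hy z hz
      nlinarith [le_max_left K₁ K₂, hK₁]
    · rw [e11 x hx y hy, e12 y hy z hz, e12 x hx z hz]
      have n1 := h₁0 x hx y hy
      nlinarith [hcpos.le]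
    · rw [e12 x hx y hy, e21 y hy z hz, e11 x hx z hz]
      have hb : d₁ x z ≤ c := le_trans (hle₁ x hx z hz) (le_max_left _ _)
      nlinarith [hcpos.le]
    · rw [e12 x hx y hy, e22 y hy z hz, e12 x hx z hz]
      have n2 := h₂0 y hy z hz
      nlinarith [hcpos.le]
    · rw [e21 x hx y hy, e11 y hy z hz, e21 x hx z hz]
      have n2 := h₁0 y hy z hz
      nlinarith [hcpos.le]
    · rw [e21 x hx y hy, e12 y hy z hz, e22 x hx z hz]
      have hb : d₂ x z ≤ c := le_trans (hle₂ x hx z hz) (le_max_right _ _)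
      nlinarith [hcpos.le]
    · rw [e22 x hx y hy, e21 y hy z hz, e21 x hx z hz]
      have n1 := h₂0 x hx y hy
      nlinarith [hcpos.le]
    · rw [e22 x hx y hy, e22 y hy z hz, e22 x hx z hz]
      have := h₂t x hx y hy z hz
      have n1 := h₂0 x hx y hy
      have n2 := h₂0 y hy z hz
      nlinarith [le_max_right K₁ K₂, hK₂]
  · -- diameter
    obtain ⟨p₁, hp₁⟩ := hne₁
    obtain ⟨p₂, hp₂⟩ := hne₂
    have hmem : c ∈ distSet (X₁ ∪ X₂) d :=
      ⟨p₁, Or.inl hp₁, p₂, Or.inr hp₂, e12 p₁ hp₁ p₂ hp₂⟩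
    have hub : ∀ s ∈ distSet (X₁ ∪ X₂) d, s ≤ c := by
      rintro s ⟨x, hx | hx, y, hy | hy, rfl⟩
      · rw [e11 x hx y hy]; exact le_trans (hle₁ x hx y hy) (le_max_left _ _)
      · rw [e12 x hx y hy]
      · rw [e21 x hx y hy]
      · rw [e22 x hx y hy]; exact le_trans (hle₂ x hx y hy) (le_max_right _ _)
    exact le_antisymm (csSup_le ⟨c, hmem⟩ hub) (le_csSup ⟨c, hub⟩ hmem)
end

section
/- Let K ≥ 1 and let f : [0,∞) → [0,∞) be a function such that for every b-metric space (X,d) with relaxation constant K, the function f∘d is a semimetric and (X, f∘d) is a b-metric space (for some relaxation constant depending on the space). Then there exists a single constant K′ ≥ 1 such that: (a) for every K-triangle triplet (a,b,c), the values f(a), f(b), f(c) can be arranged into a K′-triangle triplet; and (b) for every b-metric space (X,d) with relaxation constant K, the space (X, f∘d) is a b-metric space with relaxation constant K′. -/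
section UniformHelpers

lemma ms_swap12 (x y z : ℝ) : ({y, x, z} : Multiset ℝ) = {x, y, z} :=
  Multiset.cons_swap y x {z}

lemma ms_swap23 (x y z : ℝ) : ({x, z, y} : Multiset ℝ) = {x, y, z} :=
  congrArg (Multiset.cons x) (Multiset.cons_swap z y 0)

lemma ms_rot (x y z : ℝ) : ({y, z, x} : Multiset ℝ) = {x, y, z} := by
  rw [ms_swap23, ms_swap12]

lemma ms_rot2 (x y z : ℝ) : ({z, x, y} : Multiset ℝ) = {x, y, z} := by
  rw [ms_swap12, ms_swap23]

lemma ms_rev (x y z : ℝ) : ({z, y, x} : Multiset ℝ) = {x, y, z} := by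
  rw [ms_swap12, ms_rot]

lemma forms_of_each {M x y z : ℝ} (hx : 0 ≤ x) (hy : 0 ≤ y) (hz : 0 ≤ z)
    (h1 : x ≤ M * (y + z)) (h2 : y ≤ M * (x + z)) (h3 : z ≤ M * (x + y)) :
    FormsTriangleTriplet M x y z := by
  rcases le_total x y with hxy | hxy
  · rcases le_total y z with hyz | hyz
    · exact ⟨z, y, x, ms_rev x y z, hyz, hxy, hx, by rw [add_comm y x]; exact h3⟩
    · rcases le_total x z with hxz | hxz
      · exact ⟨y, z, x, ms_rot x y z, hyz, hxz, hx, by rw [add_comm z x]; exact h2⟩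
      · exact ⟨y, x, z, ms_swap12 x y z, hxy, hxz, hz, h2⟩
  · rcases le_total x z with hxz | hxz
    · exact ⟨z, x, y, ms_rot2 x y z, hxz, hxy, hy, h3⟩
    · rcases le_total y z with hyz | hyz
      · exact ⟨x, z, y, ms_swap23 x y z, hxz, hyz, hy, by rw [add_comm z y]; exact h1⟩
      · exact ⟨x, y, z, rfl, hxy, hyz, hz, h1⟩

lemma forms_trans {M x y z x' y' z' : ℝ} (h : ({x, y, z} : Multiset ℝ) = {x', y', z'})
    (hf : FormsTriangleTriplet M x y z) : FormsTriangleTriplet M x' y' z' := by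
  obtain ⟨a, b, c, hm, ht⟩ := hf
  exact ⟨a, b, c, hm.trans h, ht⟩

lemma forms_imp {M x y z : ℝ} (hM : 0 ≤ M) (h : FormsTriangleTriplet M x y z) :
    z ≤ M * (x + y) := by
  obtain ⟨a, b, c, hm, h1, h2, h3, h4⟩ := h
  have hsum : a + b + c = x + y + z := by
    have := congrArg Multiset.sum hm
    simp at this
    linarith
  have hzmem : z = a ∨ z = b ∨ z = c := by
    have : z ∈ ({a, b, c} : Multiset ℝ) := by rw [hm]; simp
    simpa using this
  rcases hzmem with rfl | rfl | rfl
  · have hxy : x + y = b + c := by linarith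
    rw [hxy]; exact h4
  · have hxy : x + y = a + c := by linarith
    rw [hxy]
    have h5 : M * (z + c) ≤ M * (a + c) :=
      mul_le_mul_of_nonneg_left (by linarith) hM
    linarith
  · have hxy : x + y = a + b := by linarith
    rw [hxy]
    have h5 : M * (b + z) ≤ M * (a + b) :=
      mul_le_mul_of_nonneg_left (by linarith) hM
    linarith

noncomputable def triDist (t : ℝ × ℝ × ℝ) (i j : Fin 3) : ℝ :=
  if i = j then 0
  else if i = 0 ∧ j = 1 ∨ i = 1 ∧ j = 0 then t.1
  else if i = 0 ∧ j = 2 ∨ i = 2 ∧ j = 0 then t.2.1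
  else t.2.2

open Classical in
noncomputable def bigD : (ℝ × ℝ × ℝ) × Fin 3 → (ℝ × ℝ × ℝ) × Fin 3 → ℝ :=
  fun p q => if p.1 = q.1 then triDist p.1 p.2 q.2 else p.1.1 + 1 + (q.1.1 + 1)

lemma triDist_symm (t : ℝ × ℝ × ℝ) (i j : Fin 3) : triDist t i j = triDist t j i := by
  fin_cases i <;> fin_cases j <;> simp [triDist]

lemma triDist_nonneg {t : ℝ × ℝ × ℝ} (h1 : t.2.1 ≤ t.1) (h2 : t.2.2 ≤ t.2.1)
    (h3 : 0 ≤ t.2.2) (i j : Fin 3) : 0 ≤ triDist t i j := by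
  fin_cases i <;> fin_cases j <;> simp [triDist] <;> linarith

lemma triDist_le {t : ℝ × ℝ × ℝ} (h1 : t.2.1 ≤ t.1) (h2 : t.2.2 ≤ t.2.1)
    (h3 : 0 ≤ t.2.2) (i j : Fin 3) : triDist t i j ≤ t.1 := by
  fin_cases i <;> fin_cases j <;> simp [triDist] <;> linarith

lemma triDist_eq_zero {t : ℝ × ℝ × ℝ} (h1 : t.2.1 ≤ t.1) (h2 : t.2.2 ≤ t.2.1)
    (h3 : 0 < t.2.2) (i j : Fin 3) : triDist t i j = 0 ↔ i = j := by
  fin_cases i <;> fin_cases j <;> simp [triDist] <;> intro h <;> linarith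

set_option maxHeartbeats 1000000 in
lemma triDist_tri {K : ℝ} {t : ℝ × ℝ × ℝ} (hK : 1 ≤ K) (h1 : t.2.1 ≤ t.1)
    (h2 : t.2.2 ≤ t.2.1) (h3 : 0 ≤ t.2.2) (h4 : t.1 ≤ K * (t.2.1 + t.2.2))
    (i j k : Fin 3) : triDist t i k ≤ K * (triDist t i j + triDist t j k) := by
  have ha0 : (0:ℝ) ≤ t.1 := by linarith
  have hb0 : (0:ℝ) ≤ t.2.1 := by linarith
  have hKa : 0 ≤ K * t.1 := mul_nonneg (by linarith) ha0
  have hKb : 0 ≤ K * t.2.1 := mul_nonneg (by linarith) hb0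
  have hKc : 0 ≤ K * t.2.2 := mul_nonneg (by linarith) h3
  have hta : t.1 ≤ K * t.1 := le_mul_of_one_le_left ha0 hK
  have htb : t.2.1 ≤ K * t.2.1 := le_mul_of_one_le_left hb0 hK
  have htc : t.2.2 ≤ K * t.2.2 := le_mul_of_one_le_left h3 hK
  have e4 : t.1 ≤ K * t.2.1 + K * t.2.2 := by nlinarith
  fin_cases i <;> fin_cases j <;> fin_cases k <;> simp [triDist] <;> linarith

lemma triDist01 (t : ℝ × ℝ × ℝ) : triDist t 0 1 = t.1 := by simp [triDist]
lemma triDist10 (t : ℝ × ℝ × ℝ) : triDist t 1 0 = t.1 := by simp [triDist]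
lemma triDist02 (t : ℝ × ℝ × ℝ) : triDist t 0 2 = t.2.1 := by simp [triDist]
lemma triDist20 (t : ℝ × ℝ × ℝ) : triDist t 2 0 = t.2.1 := by simp [triDist]
lemma triDist12 (t : ℝ × ℝ × ℝ) : triDist t 1 2 = t.2.2 := by simp [triDist]
lemma triDist21 (t : ℝ × ℝ × ℝ) : triDist t 2 1 = t.2.2 := by simp [triDist]

lemma bigD_same (t : ℝ × ℝ × ℝ) (i j : Fin 3) : bigD (t, i) (t, j) = triDist t i j := by
  simp [bigD]

lemma big_isB {K : ℝ} (hK : 1 ≤ K) :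
    IsBMetricOn {p : (ℝ × ℝ × ℝ) × Fin 3 |
        IsTriangleTriplet K p.1.1 p.1.2.1 p.1.2.2 ∧ 0 < p.1.2.2} bigD K := by
  set X := {p : (ℝ × ℝ × ℝ) × Fin 3 |
      IsTriangleTriplet K p.1.1 p.1.2.1 p.1.2.2 ∧ 0 < p.1.2.2} with hX
  have hmem : ∀ p ∈ X, p.1.2.1 ≤ p.1.1 ∧ p.1.2.2 ≤ p.1.2.1 ∧ 0 < p.1.2.2 ∧
      p.1.1 ≤ K * (p.1.2.1 + p.1.2.2) := by
    intro p hp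
    obtain ⟨⟨u1, u2, u3, u4⟩, u5⟩ := hp
    exact ⟨u1, u2, u5, u4⟩
  refine ⟨⟨?_, ?_, ?_⟩, hK, ?_⟩
  · intro x hx y hy
    obtain ⟨x1, x2, x3, x4⟩ := hmem x hx
    obtain ⟨y1, y2, y3, y4⟩ := hmem y hy
    by_cases h : x.1 = y.1
    · simp only [bigD, if_pos h]
      exact triDist_nonneg x1 x2 x3.le _ _
    · simp only [bigD, if_neg h]
      linarith
  · intro x hx y hy
    obtain ⟨x1, x2, x3, x4⟩ := hmem x hx
    by_cases h : x.1 = y.1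
    · simp only [bigD, if_pos h]
      rw [triDist_eq_zero x1 x2 x3, Prod.ext_iff]
      simp [h]
    · simp only [bigD, if_neg h]
      obtain ⟨y1, y2, y3, y4⟩ := hmem y hy
      constructor
      · intro h'; exfalso; linarith
      · intro h'; exact absurd (congrArg Prod.fst h') h
  · intro x hx y hy
    by_cases h : x.1 = y.1
    · simp only [bigD, if_pos h, if_pos h.symm, h]
      exact triDist_symm _ _ _
    · have h2 : ¬ y.1 = x.1 := fun h' => h h'.symm
      simp only [bigD, if_neg h, if_neg h2]
      ring
  · intro x hx y hy z hz
    obtain ⟨x1, x2, x3, x4⟩ := hmem x hx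
    obtain ⟨y1, y2, y3, y4⟩ := hmem y hy
    obtain ⟨z1, z2, z3, z4⟩ := hmem z hz
    have hx0 : (0:ℝ) ≤ x.1.1 := by linarith
    have hy0 : (0:ℝ) ≤ y.1.1 := by linarith
    have hz0 : (0:ℝ) ≤ z.1.1 := by linarith
    by_cases hxz : x.1 = z.1
    · by_cases hxy : x.1 = y.1
      · have hyz : y.1 = z.1 := hxy.symm.trans hxz
        simp only [bigD, if_pos hxz, if_pos hxy, if_pos hyz]
        rw [show y.1 = x.1 from hxy.symm]
        exact triDist_tri hK x1 x2 x3.le x4 _ _ _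
      · have hyz : ¬ y.1 = z.1 := fun h' => hxy (hxz.trans h'.symm)
        simp only [bigD, if_pos hxz, if_neg hxy, if_neg hyz]
        have hle : triDist x.1 x.2 z.2 ≤ x.1.1 := triDist_le x1 x2 x3.le _ _
        nlinarith [mul_nonneg (sub_nonneg.2 hK)
          (show (0:ℝ) ≤ x.1.1 + 1 + (y.1.1 + 1) + (y.1.1 + 1 + (z.1.1 + 1)) by linarith)]
    · by_cases hxy : x.1 = y.1
      · have hyz : ¬ y.1 = z.1 := fun h' => hxz (hxy.trans h')
        simp only [bigD, if_pos hxy, if_neg hxz, if_neg hyz]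
        have hd : 0 ≤ triDist x.1 x.2 y.2 := triDist_nonneg x1 x2 x3.le _ _
        have hxy1 : x.1.1 = y.1.1 := congrArg (fun t => t.1) hxy
        nlinarith [mul_nonneg (sub_nonneg.2 hK)
          (show (0:ℝ) ≤ triDist x.1 x.2 y.2 + (y.1.1 + 1 + (z.1.1 + 1)) by linarith)]
      · by_cases hyz : y.1 = z.1
        · simp only [bigD, if_neg hxz, if_neg hxy, if_pos hyz]
          have hd : 0 ≤ triDist y.1 y.2 z.2 := triDist_nonneg y1 y2 y3.le _ _
          have hyz1 : y.1.1 = z.1.1 := congrArg (fun t => t.1) hyz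
          nlinarith [mul_nonneg (sub_nonneg.2 hK)
            (show (0:ℝ) ≤ x.1.1 + 1 + (y.1.1 + 1) + triDist y.1 y.2 z.2 by linarith)]
        · simp only [bigD, if_neg hxz, if_neg hxy, if_neg hyz]
          nlinarith [mul_nonneg (sub_nonneg.2 hK)
            (show (0:ℝ) ≤ x.1.1 + 1 + (y.1.1 + 1) + (y.1.1 + 1 + (z.1.1 + 1)) by linarith)]

end UniformHelpers

/-- A function turning every b-metric space with fixed constant `K`
into a b-metric space admits a uniform constant `K'`, both on triplets and on
the resulting spaces. -/
theorem uniform_constant_B_to_B (K : ℝ) (hK : 1 ≤ K) (f : ℝ → ℝ)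
    (hf : ∀ x : ℝ, 0 ≤ x → 0 ≤ f x)
    (hpres : ∀ (α : Type) (X : Set α) (d : α → α → ℝ), X.Nonempty →
      IsBMetricOn X d K →
        IsSemimetricOn X (fun x y => f (d x y)) ∧
        ∃ K' : ℝ, IsBMetricOn X (fun x y => f (d x y)) K') :
    ∃ K' : ℝ, 1 ≤ K' ∧
      (∀ a b c : ℝ, IsTriangleTriplet K a b c →
        FormsTriangleTriplet K' (f a) (f b) (f c)) ∧
      (∀ (α : Type) (X : Set α) (d : α → α → ℝ), X.Nonempty →
        IsBMetricOn X d K →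
          IsBMetricOn X (fun x y => f (d x y)) K') := by
  classical
  have hf0 : f 0 = 0 := by
    have h1 : IsBMetricOn (Set.univ : Set Unit) (fun _ _ => (0:ℝ)) K := by
      refine ⟨⟨fun _ _ _ _ => le_refl 0,
        fun x _ y _ => ⟨fun _ => Subsingleton.elim x y, fun _ => rfl⟩,
        fun _ _ _ _ => rfl⟩, hK, fun _ _ _ _ _ _ => by norm_num⟩
    have h2 := (hpres Unit Set.univ (fun _ _ => 0) ⟨(), Set.mem_univ ()⟩ h1).1
    have h3 := h2.2.1 () (Set.mem_univ ()) () (Set.mem_univ ())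
    simpa using h3
  set X : Set ((ℝ × ℝ × ℝ) × Fin 3) :=
    {p | IsTriangleTriplet K p.1.1 p.1.2.1 p.1.2.2 ∧ 0 < p.1.2.2} with hXdef
  have hXne : X.Nonempty :=
    ⟨((1, 1, 1), 0), ⟨⟨le_refl 1, le_refl 1, zero_le_one,
      by show (1:ℝ) ≤ K * (1 + 1); linarith⟩, one_pos⟩⟩
  obtain ⟨-, K₀, ⟨-, hK₀1, hTri⟩⟩ :=
    hpres ((ℝ × ℝ × ℝ) × Fin 3) X bigD hXne (big_isB hK)
  have hK₀0 : (0:ℝ) ≤ K₀ := by linarith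
  have hK0 : (0:ℝ) ≤ K := by linarith
  have hA : ∀ a b c : ℝ, IsTriangleTriplet K a b c →
      FormsTriangleTriplet (2 * K₀) (f a) (f b) (f c) := by
    intro a b c ht
    obtain ⟨hba, hcb, hc0, habc⟩ := ht
    have ha0 : (0:ℝ) ≤ a := by linarith
    have hb0 : (0:ℝ) ≤ b := by linarith
    have hfa : 0 ≤ f a := hf a ha0
    have hfb : 0 ≤ f b := hf b hb0
    have hfc : 0 ≤ f c := hf c hc0
    rcases lt_or_eq_of_le hc0 with hc | hc
    · have m : ∀ i : Fin 3, (((a, b, c) : ℝ × ℝ × ℝ), i) ∈ X :=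
        fun i => ⟨⟨hba, hcb, hc0, habc⟩, hc⟩
      have h1 := hTri ((a,b,c), 0) (m 0) ((a,b,c), 2) (m 2) ((a,b,c), 1) (m 1)
      have h2 := hTri ((a,b,c), 0) (m 0) ((a,b,c), 1) (m 1) ((a,b,c), 2) (m 2)
      have h3 := hTri ((a,b,c), 1) (m 1) ((a,b,c), 0) (m 0) ((a,b,c), 2) (m 2)
      simp only [bigD_same, triDist01, triDist10, triDist02, triDist20,
        triDist12, triDist21] at h1 h2 h3
      refine forms_of_each hfa hfb hfc ?_ ?_ ?_
      · linarith [mul_nonneg hK₀0 (add_nonneg hfb hfc)]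
      · linarith [mul_nonneg hK₀0 (add_nonneg hfa hfc)]
      · linarith [mul_nonneg hK₀0 (add_nonneg hfa hfb)]
    · -- c = 0
      have hc' : c = 0 := hc.symm
      subst hc'
      rcases lt_or_eq_of_le hb0 with hb | hb
      · -- 0 < b
        have hKa : 0 ≤ K * a := mul_nonneg hK0 ha0
        have hKb : 0 ≤ K * b := mul_nonneg hK0 hb0
        have m1 : ∀ i : Fin 3, (((a, a, b) : ℝ × ℝ × ℝ), i) ∈ X :=
          fun i => ⟨⟨le_refl a, hba, hb0, by nlinarith⟩, hb⟩
        have m2 : ∀ i : Fin 3, (((a, b, b) : ℝ × ℝ × ℝ), i) ∈ X :=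
          fun i => ⟨⟨hba, le_refl b, hb0, by nlinarith⟩, hb⟩
        have q1 := hTri ((a,a,b), 1) (m1 1) ((a,a,b), 0) (m1 0) ((a,a,b), 2) (m1 2)
        have q2 := hTri ((a,b,b), 0) (m2 0) ((a,b,b), 2) (m2 2) ((a,b,b), 1) (m2 1)
        simp only [bigD_same, triDist01, triDist10, triDist02, triDist20,
          triDist12, triDist21] at q1 q2
        rcases le_total (f b) (f a) with hfw | hfw
        · refine ⟨f a, f b, f 0, rfl, hfw, by rw [hf0]; exact hfb, by rw [hf0], ?_⟩
          rw [hf0]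
          linarith
        · refine ⟨f b, f a, f 0, ms_swap12 _ _ _, hfw, by rw [hf0]; exact hfa,
            by rw [hf0], ?_⟩
          rw [hf0]
          linarith
      · -- b = 0
        have hb' : b = 0 := hb.symm
        subst hb'
        have ha' : a = 0 := le_antisymm (by linarith) ha0
        subst ha'
        refine ⟨f 0, f 0, f 0, rfl, le_refl _, le_refl _, hf 0 le_rfl, ?_⟩
        rw [hf0]
        norm_num
  refine ⟨2 * K₀, by linarith, hA, ?_⟩
  intro α2 X2 d2 hne hbm
  obtain ⟨hsem2, -⟩ := hpres α2 X2 d2 hne hbm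
  refine ⟨hsem2, by linarith, ?_⟩
  intro x hx y hy z hz
  obtain ⟨⟨hnn, -, hsymm⟩, -, htri⟩ := hbm
  have h1 : d2 x y ≤ K * (d2 y z + d2 x z) := by
    have h := htri x hx z hz y hy
    have hs := hsymm z hz y hy
    rw [hs] at h
    linarith
  have h2 : d2 y z ≤ K * (d2 x y + d2 x z) := by
    have h := htri y hy x hx z hz
    have hs := hsymm y hy x hx
    rw [hs] at h
    linarith
  have h3 : d2 x z ≤ K * (d2 x y + d2 y z) := htri x hx y hy z hz
  have hforms := forms_of_each (hnn x hx y hy) (hnn y hy z hz) (hnn x hx z hz) h1 h2 h3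
  obtain ⟨A, B, C, hm, htt⟩ := hforms
  have hFA := hA A B C htt
  have hmm : ({f A, f B, f C} : Multiset ℝ) =
      {f (d2 x y), f (d2 y z), f (d2 x z)} := by
    have := congrArg (Multiset.map f) hm
    simpa using this
  have hfin := forms_imp (by linarith : (0:ℝ) ≤ 2 * K₀) (forms_trans hmm hFA)
  simpa using hfin
end

section
/- Let K ≥ 1 and let f : [0,∞) → [0,∞) be a function such that for every strong b-metric space (X,d) with relaxation constant K, the function f∘d is a semimetric and (X, f∘d) is a strong b-metric space (for some relaxation constant depending on the space). Then there exists a single constant K′ ≥ 1 such that: (a) for every strong K-triangle triplet (a,b,c), the values f(a), f(b), f(c) can be arranged into a strong K′-triangle triplet; and (b) for every strong b-metric space (X,d) with relaxation constant K, the space (X, f∘d) is a strong b-metric space with relaxation constant K′. -/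
section AuxUniformConstant

def auxS (t : ℝ × ℝ × ℝ) : ℝ := t.1 + t.2.1 + t.2.2

def auxW (t : ℝ × ℝ × ℝ) (i j : Fin 3) : ℝ :=
  if i = j then 0 else if i.val + j.val = 1 then t.2.2
  else if i.val + j.val = 2 then t.2.1 else t.1

noncomputable def auxD : ((ℝ × ℝ × ℝ) × Fin 3) → ((ℝ × ℝ × ℝ) × Fin 3) → ℝ :=
  fun p q => if p.1 = q.1 then auxW p.1 p.2 q.2 else auxS p.1 + auxS q.1

def auxMem (K : ℝ) (t : ℝ × ℝ × ℝ) : Prop :=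
  0 < t.1 ∧ 0 < t.2.1 ∧ 0 < t.2.2 ∧
  t.1 ≤ K * t.2.1 + t.2.2 ∧ t.1 ≤ K * t.2.2 + t.2.1 ∧
  t.2.1 ≤ K * t.1 + t.2.2 ∧ t.2.1 ≤ K * t.2.2 + t.1 ∧
  t.2.2 ≤ K * t.1 + t.2.1 ∧ t.2.2 ≤ K * t.2.1 + t.1

lemma auxW_nonneg {K : ℝ} {t : ℝ × ℝ × ℝ} (h : auxMem K t) (i j : Fin 3) :
    0 ≤ auxW t i j := by
  unfold auxW; split_ifs <;> linarith [h.1, h.2.1, h.2.2.1]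

lemma auxW_pos {K : ℝ} {t : ℝ × ℝ × ℝ} (h : auxMem K t) {i j : Fin 3} (hij : i ≠ j) :
    0 < auxW t i j := by
  unfold auxW; split_ifs <;> first | exact absurd ‹_› hij | linarith [h.1, h.2.1, h.2.2.1]

lemma auxW_le {K : ℝ} {t : ℝ × ℝ × ℝ} (h : auxMem K t) (i j : Fin 3) :
    auxW t i j ≤ auxS t := by
  unfold auxW auxS; split_ifs <;> linarith [h.1, h.2.1, h.2.2.1]

lemma auxS_pos {K : ℝ} {t : ℝ × ℝ × ℝ} (h : auxMem K t) : 0 < auxS t := by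
  unfold auxS; linarith [h.1, h.2.1, h.2.2.1]

lemma auxW_symm (t : ℝ × ℝ × ℝ) (i j : Fin 3) : auxW t i j = auxW t j i := by
  fin_cases i <;> fin_cases j <;> simp [auxW]

lemma auxW_tri {K : ℝ} (hK : 1 ≤ K) {t : ℝ × ℝ × ℝ} (h : auxMem K t) (i j k : Fin 3) :
    auxW t i k ≤ K * auxW t i j + auxW t j k := by
  obtain ⟨h1, h2, h3, ha, hb, hc, hd, he, hf⟩ := h
  have e1 : t.1 ≤ K * t.1 := le_mul_of_one_le_left h1.le hK
  have e2 : t.2.1 ≤ K * t.2.1 := le_mul_of_one_le_left h2.le hK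
  have e3 : t.2.2 ≤ K * t.2.2 := le_mul_of_one_le_left h3.le hK
  fin_cases i <;> fin_cases j <;> fin_cases k <;> simp [auxW] <;> linarith

lemma aux_space {K : ℝ} (hK : 1 ≤ K) :
    IsStrongBMetricOn {p : (ℝ × ℝ × ℝ) × Fin 3 | auxMem K p.1} auxD K := by
  refine ⟨⟨?_, ?_, ?_⟩, hK, ?_⟩
  · intro p hp q hq
    unfold auxD; split_ifs with h
    · exact auxW_nonneg hp _ _
    · linarith [auxS_pos hp, auxS_pos hq]
  · intro p hp q hq
    unfold auxD; split_ifs with h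
    · constructor
      · intro h0
        by_cases h2 : p.2 = q.2
        · exact Prod.ext h h2
        · exact absurd h0 (ne_of_gt (auxW_pos hp h2))
      · intro h0; subst h0; simp [auxW]
    · constructor
      · intro h0; exact absurd h0 (ne_of_gt (by linarith [auxS_pos hp, auxS_pos hq]))
      · intro h0; exact absurd (congrArg Prod.fst h0) h
  · intro p hp q hq
    unfold auxD
    by_cases h : p.1 = q.1
    · rw [if_pos h, if_pos h.symm, h]; exact auxW_symm _ _ _
    · rw [if_neg h, if_neg (Ne.symm h)]; ring
  · intro p hp q hq r hr
    have sp := auxS_pos hp; have sq := auxS_pos hq; have sr := auxS_pos hr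
    have hK0 : (0:ℝ) ≤ K := by linarith
    unfold auxD
    by_cases h12 : p.1 = q.1 <;> by_cases h23 : q.1 = r.1 <;> by_cases h13 : p.1 = r.1
    · rw [if_pos h12, if_pos h23, if_pos h13, ← h12]
      exact auxW_tri hK hp _ _ _
    · exact absurd (h12.trans h23) h13
    · exact absurd (h12.symm.trans h13) h23
    · rw [if_pos h12, if_neg h23, if_neg h13, h12]
      nlinarith [mul_nonneg hK0 (auxW_nonneg hq p.2 q.2)]
    · exact absurd (h13.trans h23.symm) h12
    · rw [if_neg h12, if_pos h23, if_neg h13, ← h23]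
      have := auxW_nonneg hq q.2 r.2
      nlinarith [le_mul_of_one_le_left (by linarith : (0:ℝ) ≤ auxS p.1 + auxS q.1) hK]
    · rw [if_neg h12, if_neg h23, if_pos h13]
      have h1 := auxW_le hp p.2 r.2
      nlinarith [le_mul_of_one_le_left (by linarith : (0:ℝ) ≤ auxS p.1 + auxS q.1) hK]
    · rw [if_neg h12, if_neg h23, if_neg h13]
      nlinarith [le_mul_of_one_le_left (by linarith : (0:ℝ) ≤ auxS p.1 + auxS q.1) hK]

end AuxUniformConstant


lemma msPerm1 (a b c : ℝ) : ({b, a, c} : Multiset ℝ) = {a, b, c} := by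
  show b ::ₘ a ::ₘ c ::ₘ 0 = a ::ₘ b ::ₘ c ::ₘ 0
  rw [Multiset.cons_swap b a]

lemma msPerm2 (a b c : ℝ) : ({a, c, b} : Multiset ℝ) = {a, b, c} := by
  show a ::ₘ c ::ₘ b ::ₘ 0 = a ::ₘ b ::ₘ c ::ₘ 0
  rw [Multiset.cons_swap c b]

lemma msPerm3 (a b c : ℝ) : ({c, a, b} : Multiset ℝ) = {a, b, c} := by
  show c ::ₘ a ::ₘ b ::ₘ 0 = a ::ₘ b ::ₘ c ::ₘ 0
  rw [Multiset.cons_swap c a, Multiset.cons_swap c b]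

lemma msPerm4 (a b c : ℝ) : ({b, c, a} : Multiset ℝ) = {a, b, c} := by
  show b ::ₘ c ::ₘ a ::ₘ 0 = a ::ₘ b ::ₘ c ::ₘ 0
  rw [Multiset.cons_swap c a, Multiset.cons_swap b a]

lemma msPerm5 (a b c : ℝ) : ({c, b, a} : Multiset ℝ) = {a, b, c} := by
  show c ::ₘ b ::ₘ a ::ₘ 0 = a ::ₘ b ::ₘ c ::ₘ 0
  rw [Multiset.cons_swap b a, Multiset.cons_swap c a, Multiset.cons_swap c b]

lemma forms_aux {K' : ℝ} (hK' : 1 ≤ K') {x y z : ℝ}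
    (hx : 0 ≤ x) (hy : 0 ≤ y) (hz : 0 ≤ z)
    (h1 : x ≤ K' * y + z) (h2 : x ≤ K' * z + y)
    (h3 : y ≤ K' * x + z) (h4 : y ≤ K' * z + x)
    (h5 : z ≤ K' * x + y) (h6 : z ≤ K' * y + x) :
    FormsStrongTriangleTriplet K' x y z := by
  rcases le_total x y with hxy | hxy <;> rcases le_total y z with hyz | hyz <;>
    rcases le_total x z with hxz | hxz
  · exact ⟨z, y, x, msPerm5 x y z, hyz, hxy, hx, h5⟩
  · exact ⟨z, y, x, msPerm5 x y z, hyz, hxy, hx, h5⟩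
  · exact ⟨y, z, x, msPerm4 x y z, hyz, hxz, hx, h3⟩
  · exact ⟨y, x, z, msPerm1 x y z, hxy, hxz, hz, h4⟩
  · exact ⟨z, x, y, msPerm3 x y z, hxz, hxy, hy, h6⟩
  · exact ⟨x, z, y, msPerm2 x y z, hxz, hyz, hy, h1⟩
  · exact ⟨x, y, z, rfl, hxy, hyz, hz, h2⟩
  · exact ⟨x, y, z, rfl, hxy, hyz, hz, h2⟩

/-- A function turning every strong b-metric space with fixed
constant `K` into a strong b-metric space admits a uniform constant `K'`. -/
theorem uniform_constant_S_to_S (K : ℝ) (hK : 1 ≤ K) (f : ℝ → ℝ)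
    (hf : ∀ x : ℝ, 0 ≤ x → 0 ≤ f x)
    (hpres : ∀ (α : Type) (X : Set α) (d : α → α → ℝ), X.Nonempty →
      IsStrongBMetricOn X d K →
        IsSemimetricOn X (fun x y => f (d x y)) ∧
        ∃ K' : ℝ, IsStrongBMetricOn X (fun x y => f (d x y)) K') :
    ∃ K' : ℝ, 1 ≤ K' ∧
      (∀ a b c : ℝ, IsStrongTriangleTriplet K a b c →
        FormsStrongTriangleTriplet K' (f a) (f b) (f c)) ∧
      (∀ (α : Type) (X : Set α) (d : α → α → ℝ), X.Nonempty →
        IsStrongBMetricOn X d K →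
          IsStrongBMetricOn X (fun x y => f (d x y)) K') := by
  have hm : auxMem K (1, 1, 1) := by
    refine ⟨one_pos, one_pos, one_pos, ?_, ?_, ?_, ?_, ?_, ?_⟩ <;> simp <;> linarith
  have hmem1 : ((1, 1, 1), (0 : Fin 3)) ∈ {p : (ℝ × ℝ × ℝ) × Fin 3 | auxMem K p.1} := hm
  obtain ⟨hsemi', K', hbm'⟩ := hpres ((ℝ × ℝ × ℝ) × Fin 3) {p | auxMem K p.1} auxD
    ⟨((1, 1, 1), (0 : Fin 3)), hmem1⟩ (aux_space hK)
  obtain ⟨hsemi2, hK', htri⟩ := hbm'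
  have f0 : f 0 = 0 := by
    have h := (hsemi'.2.1 _ hmem1 _ hmem1).mpr rfl
    simpa [auxD, auxW] using h
  -- six inequalities from the universal space
  have hU : ∀ t : ℝ × ℝ × ℝ, auxMem K t →
      f t.1 ≤ K' * f t.2.1 + f t.2.2 ∧ f t.1 ≤ K' * f t.2.2 + f t.2.1 ∧
      f t.2.1 ≤ K' * f t.1 + f t.2.2 ∧ f t.2.1 ≤ K' * f t.2.2 + f t.1 ∧
      f t.2.2 ≤ K' * f t.1 + f t.2.1 ∧ f t.2.2 ≤ K' * f t.2.1 + f t.1 := by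
    intro t ht
    have m0 : (t, (0 : Fin 3)) ∈ {p : (ℝ × ℝ × ℝ) × Fin 3 | auxMem K p.1} := ht
    have m1 : (t, (1 : Fin 3)) ∈ {p : (ℝ × ℝ × ℝ) × Fin 3 | auxMem K p.1} := ht
    have m2 : (t, (2 : Fin 3)) ∈ {p : (ℝ × ℝ × ℝ) × Fin 3 | auxMem K p.1} := ht
    have d01 : auxD (t, (0 : Fin 3)) (t, (1 : Fin 3)) = t.2.2 := by simp [auxD, auxW]
    have d10 : auxD (t, (1 : Fin 3)) (t, (0 : Fin 3)) = t.2.2 := by simp [auxD, auxW]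
    have d02 : auxD (t, (0 : Fin 3)) (t, (2 : Fin 3)) = t.2.1 := by simp [auxD, auxW]
    have d20 : auxD (t, (2 : Fin 3)) (t, (0 : Fin 3)) = t.2.1 := by simp [auxD, auxW]
    have d12 : auxD (t, (1 : Fin 3)) (t, (2 : Fin 3)) = t.1 := by simp [auxD, auxW]
    have d21 : auxD (t, (2 : Fin 3)) (t, (1 : Fin 3)) = t.1 := by simp [auxD, auxW]
    refine ⟨?_, ?_, ?_, ?_, ?_, ?_⟩
    · have h := htri _ m2 _ m0 _ m1; simp only [d21, d20, d01] at h; exact h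
    · have h := htri _ m1 _ m0 _ m2; simp only [d12, d10, d02] at h; exact h
    · have h := htri _ m2 _ m1 _ m0; simp only [d20, d21, d10] at h; exact h
    · have h := htri _ m0 _ m1 _ m2; simp only [d02, d01, d12] at h; exact h
    · have h := htri _ m1 _ m2 _ m0; simp only [d10, d12, d20] at h; exact h
    · have h := htri _ m0 _ m2 _ m1; simp only [d01, d02, d21] at h; exact h
  have hK'0 : (0 : ℝ) ≤ K' := by linarith
  -- master lemma
  have hA : ∀ u v w : ℝ, 0 ≤ u → 0 ≤ v → 0 ≤ w →
      u ≤ K * v + w → u ≤ K * w + v → v ≤ K * u + w → v ≤ K * w + u →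
      w ≤ K * u + v → w ≤ K * v + u →
      f u ≤ K' * f v + f w ∧ f u ≤ K' * f w + f v ∧ f v ≤ K' * f u + f w ∧
      f v ≤ K' * f w + f u ∧ f w ≤ K' * f u + f v ∧ f w ≤ K' * f v + f u := by
    intro u v w hu hv hw a1 a2 a3 a4 a5 a6
    rcases hu.eq_or_lt with hu0 | hu0
    · -- u = 0, hence v = w
      have e : K * u = 0 := by rw [← hu0, mul_zero]
      have hvw : v = w := le_antisymm (by linarith) (by linarith)
      subst hvw
      rw [← hu0]
      have fv := hf v hv
      have fKv : f v ≤ K' * f v := le_mul_of_one_le_left fv hK'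
      refine ⟨?_, ?_, ?_, ?_, ?_, ?_⟩ <;> simp [f0] <;>
        nlinarith [mul_nonneg hK'0 fv]
    rcases hv.eq_or_lt with hv0 | hv0
    · -- v = 0, hence u = w
      have e : K * v = 0 := by rw [← hv0, mul_zero]
      have huw : u = w := le_antisymm (by linarith) (by linarith)
      subst huw
      rw [← hv0]
      have fu := hf u hu
      have fKu : f u ≤ K' * f u := le_mul_of_one_le_left fu hK'
      refine ⟨?_, ?_, ?_, ?_, ?_, ?_⟩ <;> simp [f0] <;>
        nlinarith [mul_nonneg hK'0 fu]
    rcases hw.eq_or_lt with hw0 | hw0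
    · -- w = 0, hence u = v
      have e : K * w = 0 := by rw [← hw0, mul_zero]
      have huv : u = v := le_antisymm (by linarith) (by linarith)
      subst huv
      rw [← hw0]
      have fu := hf u hu
      have fKu : f u ≤ K' * f u := le_mul_of_one_le_left fu hK'
      refine ⟨?_, ?_, ?_, ?_, ?_, ?_⟩ <;> simp [f0] <;>
        nlinarith [mul_nonneg hK'0 fu]
    · exact hU (u, v, w) ⟨hu0, hv0, hw0, a1, a2, a3, a4, a5, a6⟩
  refine ⟨K', hK', ?_, ?_⟩
  · -- part (a)
    rintro a b c ⟨hba, hcb, hc0, habc⟩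
    have hb0 : 0 ≤ b := le_trans hc0 hcb
    have ha0 : 0 ≤ a := le_trans hb0 hba
    have hK0 : (0 : ℝ) ≤ K := by linarith
    have k1 : a ≤ K * b + c := by
      nlinarith [mul_nonneg (by linarith : (0:ℝ) ≤ K - 1) (by linarith : (0:ℝ) ≤ b - c)]
    have k3 : b ≤ K * a + c := by nlinarith [le_mul_of_one_le_left ha0 hK]
    have k4 : b ≤ K * c + a := by nlinarith [mul_nonneg hK0 hc0]
    have k5 : c ≤ K * a + b := by nlinarith [mul_nonneg hK0 ha0]
    have k6 : c ≤ K * b + a := by nlinarith [mul_nonneg hK0 hb0]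
    obtain ⟨s1, s2, s3, s4, s5, s6⟩ := hA a b c ha0 hb0 hc0 k1 habc k3 k4 k5 k6
    exact forms_aux hK' (hf a ha0) (hf b hb0) (hf c hc0) s1 s2 s3 s4 s5 s6
  · -- part (b)
    intro α X d hne hsb
    obtain ⟨hsem, -, htriK⟩ := hsb
    refine ⟨(hpres α X d hne ⟨hsem, hK, htriK⟩).1, hK', ?_⟩
    intro x hx y hy z hz
    have dnn := hsem.1
    have dsym := hsem.2.2
    have b1 : d x z ≤ K * d x y + d y z := htriK x hx y hy z hz
    have b2 : d x z ≤ K * d y z + d x y := by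
      have h := htriK z hz y hy x hx
      rw [dsym z hz x hx, dsym z hz y hy, dsym y hy x hx] at h
      exact h
    have b3 : d x y ≤ K * d x z + d y z := by
      have h := htriK x hx z hz y hy
      rw [dsym z hz y hy] at h
      exact h
    have b4 : d x y ≤ K * d y z + d x z := by
      have h := htriK y hy z hz x hx
      rw [dsym y hy x hx, dsym z hz x hx] at h
      exact h
    have b5 : d y z ≤ K * d x z + d x y := by
      have h := htriK z hz x hx y hy
      rw [dsym z hz y hy, dsym z hz x hx] at h
      exact h
    have b6 : d y z ≤ K * d x y + d x z := by
      have h := htriK y hy x hx z hz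
      rw [dsym y hy x hx] at h
      exact h
    exact (hA (d x z) (d x y) (d y z) (dnn x hx z hz) (dnn x hx y hy) (dnn y hy z hz)
      b1 b2 b3 b4 b5 b6).1
end

section
/- Let K ≥ 1 and let f : [0,∞) → [0,∞) be a function such that for every strong b-metric space (X,d) with relaxation constant K, the function f∘d is a semimetric and (X, f∘d) is a b-metric space (for some relaxation constant depending on the space). Then there exists a single constant K′ ≥ 1 such that: (a) for every strong K-triangle triplet (a,b,c), the values f(a), f(b), f(c) can be arranged into a K′-triangle triplet; and (b) for every strong b-metric space (X,d) with relaxation constant K, the space (X, f∘d) is a b-metric space with relaxation constant K′. -/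
lemma UCSB.mswap12 (x y z : ℝ) : ({y,x,z}:Multiset ℝ) = {x,y,z} := Multiset.cons_swap y x {z}
lemma UCSB.mswap23 (x y z : ℝ) : ({x,z,y}:Multiset ℝ) = {x,y,z} := congrArg (x ::ₘ ·) (Multiset.cons_swap z y 0)
lemma UCSB.mrot (x y z : ℝ) : ({y,z,x}:Multiset ℝ) = {x,y,z} := (UCSB.mswap23 y x z).trans (UCSB.mswap12 x y z)
lemma UCSB.mrot2 (x y z : ℝ) : ({z,x,y}:Multiset ℝ) = {x,y,z} := (UCSB.mswap12 x z y).trans (UCSB.mswap23 x y z)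
lemma UCSB.mrev (x y z : ℝ) : ({z,y,x}:Multiset ℝ) = {x,y,z} := (UCSB.mswap12 y z x).trans (UCSB.mrot x y z)

/-- If all three b-metric-type inequalities hold, the values form a triplet. -/
lemma UCSB.forms_of_all (K x y z : ℝ) (hK : 1 ≤ K) (hx : 0 ≤ x) (hy : 0 ≤ y) (hz : 0 ≤ z)
    (h1 : x ≤ K * (y + z)) (h2 : y ≤ K * (x + z)) (h3 : z ≤ K * (x + y)) :
    FormsTriangleTriplet K x y z := by
  rcases le_total x y with hxy | hxy <;> rcases le_total y z with hyz | hyz <;>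
    rcases le_total x z with hxz | hxz
  · exact ⟨z, y, x, UCSB.mrev x y z, hyz, hxy, hx, by rw [add_comm]; exact h3⟩
  · exact ⟨z, y, x, UCSB.mrev x y z, hyz, hxy, hx, by rw [add_comm]; exact h3⟩
  · exact ⟨y, z, x, UCSB.mrot x y z, hyz, hxz, hx, by rw [add_comm]; exact h2⟩
  · exact ⟨y, x, z, UCSB.mswap12 x y z, hxy, hxz, hz, h2⟩
  · exact ⟨z, x, y, UCSB.mrot2 x y z, hxz, hxy, hy, h3⟩
  · exact ⟨x, z, y, UCSB.mswap23 x y z, hxz, hyz, hy, by rw [add_comm]; exact h1⟩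
  · exact ⟨x, y, z, rfl, hxy, hyz, hz, h1⟩
  · exact ⟨x, y, z, rfl, hxy, hyz, hz, h1⟩

/-- Extraction: from a formed triplet on a permutation, get the inequality. -/
lemma UCSB.extract (K x y z u v w : ℝ) (hK : 1 ≤ K)
    (hm : ({x, y, z} : Multiset ℝ) = {u, v, w})
    (h : FormsTriangleTriplet K x y z) : u ≤ K * (v + w) := by
  obtain ⟨a, b, c, habc, hba, hcb, hc0, hineq⟩ := h
  have hm2 : ({a, b, c} : Multiset ℝ) = {u, v, w} := habc.trans hm
  have hu : u ∈ ({a, b, c} : Multiset ℝ) := by rw [hm2]; simp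
  have hua : u ≤ a := by
    rcases (by simpa using hu : u = a ∨ u = b ∨ u = c) with h | h | h <;> linarith
  have hsum : a + (b + c) = u + (v + w) := by
    have := congrArg Multiset.sum hm2
    simpa using this
  nlinarith [hineq]

/-- Index type: nondegenerate strong K-triangle triplets. -/
def UCSB.TT (K : ℝ) : Type :=
  {t : ℝ × ℝ × ℝ // IsStrongTriangleTriplet K t.1 t.2.1 t.2.2 ∧ 0 < t.2.2}

/-- Points of the universal space: a hub `none` plus two points per triplet. -/
abbrev UCSB.Pt (K : ℝ) : Type := Option (UCSB.TT K × Bool)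

/-- Distance to the hub. -/
noncomputable def UCSB.hub {K : ℝ} : UCSB.Pt K → ℝ
  | none => 0
  | some (t, true) => t.1.2.1
  | some (t, false) => t.1.2.2

open Classical in
/-- The universal distance. -/
noncomputable def UCSB.DD {K : ℝ} (p q : UCSB.Pt K) : ℝ :=
  if p = q then 0
  else match p, q with
    | some (t, _), some (s, _) => if t = s then t.1.1 else UCSB.hub p + UCSB.hub q
    | p, q => UCSB.hub p + UCSB.hub q

namespace UCSB
variable {K : ℝ}

lemma hub_pos (t : TT K) (u : Bool) : 0 < hub (some (t, u)) := by
  obtain ⟨⟨hba, hcb, hc0, hin⟩, hc⟩ := t.2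
  cases u <;> simp [hub] <;> linarith

lemma hub_nonneg (p : Pt K) : 0 ≤ hub p := by
  cases p with
  | none => simp [hub]
  | some a => exact (hub_pos a.1 a.2).le

lemma hub_le_a (t : TT K) (u : Bool) : hub (some (t, u)) ≤ t.1.1 := by
  obtain ⟨⟨hba, hcb, hc0, hin⟩, hc⟩ := t.2
  cases u <;> simp [hub] <;> linarith

lemma a_pos (t : TT K) : 0 < t.1.1 := lt_of_lt_of_le (hub_pos t true) (hub_le_a t true)

lemma a_le (hK : 1 ≤ K) (t : TT K) (u : Bool) :
    t.1.1 ≤ K * hub (some (t, u)) + hub (some (t, !u)) := by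
  obtain ⟨⟨hba, hcb, hc0, hin⟩, hc⟩ := t.2
  cases u <;> simp [hub] <;> nlinarith

lemma DD_self (p : Pt K) : DD p p = 0 := by simp [DD]

lemma DD_pair' (t : TT K) (u v : Bool) (huv : u ≠ v) :
    DD (some (t, u)) (some (t, v)) = t.1.1 := by
  have hne : (some (t, u) : Pt K) ≠ some (t, v) := by
    simp only [ne_eq, Option.some.injEq, Prod.mk.injEq]
    tauto
  simp [DD, hne]

lemma DD_none_left (p : Pt K) : DD none p = hub p := by
  cases p with
  | none => simp [DD, hub]
  | some a => simp [DD, hub]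

lemma DD_none_right (p : Pt K) : DD p none = hub p := by
  cases p with
  | none => simp [DD, hub]
  | some a => simp [DD, hub]

/-- Characterization of DD for distinct points. -/
lemma DD_char (p q : Pt K) (hpq : p ≠ q) :
    DD p q = hub p + hub q ∨
      ∃ t u, p = some (t, u) ∧ q = some (t, !u) ∧ DD p q = t.1.1 := by
  cases p with
  | none =>
    left; cases q with
    | none => exact absurd rfl hpq
    | some a => simp [DD, hub]
  | some a =>
    obtain ⟨t, u⟩ := a
    cases q with
    | none => left; simp [DD, hub]
    | some b =>
      obtain ⟨s, v⟩ := b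
      by_cases hts : t = s
      · subst hts
        have huv : u ≠ v := by rintro rfl; exact hpq rfl
        right
        refine ⟨t, u, rfl, ?_, ?_⟩
        · cases u <;> cases v <;> simp_all
        · exact DD_pair' t u v huv
      · left; simp [DD, hpq, hts]

lemma DD_nonneg (p q : Pt K) : 0 ≤ DD p q := by
  by_cases h : p = q
  · subst h; simp [DD_self]
  · rcases DD_char p q h with h' | ⟨t, u, _, _, h'⟩
    · rw [h']; have := hub_nonneg p; have := hub_nonneg q; linarith
    · rw [h']; exact (a_pos t).le

lemma DD_symm (p q : Pt K) : DD p q = DD q p := by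
  by_cases h : p = q
  · subst h; rfl
  · have h' : q ≠ p := Ne.symm h
    cases p with
    | none => rw [DD_none_left, DD_none_right]
    | some a =>
      obtain ⟨t, u⟩ := a
      cases q with
      | none => rw [DD_none_left, DD_none_right]
      | some b =>
        obtain ⟨s, v⟩ := b
        by_cases hts : t = s
        · subst hts; simp [DD, h, h']
        · simp [DD, h, h', hts, Ne.symm hts]; ring

lemma DD_eq_zero_iff (p q : Pt K) : DD p q = 0 ↔ p = q := by
  constructor
  · intro h0
    by_contra hpq
    rcases DD_char p q hpq with h' | ⟨t, u, hp, hq, h'⟩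
    · rw [h'] at h0
      -- at least one of p, q is some, so hub sum > 0
      cases p with
      | none =>
        cases q with
        | none => exact hpq rfl
        | some b =>
          obtain ⟨t, u⟩ := b
          have h1 := hub_pos t u
          have h2 : hub (none : Pt K) = 0 := rfl
          linarith
      | some a =>
        have h1 := hub_pos a.1 a.2
        have h2 := hub_nonneg q
        linarith
    · rw [h'] at h0; exact absurd h0 (ne_of_gt (a_pos t))
  · intro h; subst h; exact DD_self p

/-- The strong b-metric inequality for DD. -/
lemma DD_strong (hK : 1 ≤ K) (p q r : Pt K) : DD p r ≤ K * DD p q + DD q r := by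
  have hK0 : (0:ℝ) < K := lt_of_lt_of_le one_pos hK
  by_cases hpr : p = r
  · subst hpr
    rw [DD_self]
    nlinarith [DD_nonneg p q, DD_nonneg q p]
  by_cases hpq : p = q
  · subst hpq; rw [DD_self]; linarith [DD_nonneg p r]
  by_cases hqr : q = r
  · subst hqr; rw [DD_self]; nlinarith [DD_nonneg p q]
  rcases DD_char p r hpr with hpr' | ⟨t, u, hp, hr, hpr'⟩
  · -- DD p r = hub p + hub r
    rcases DD_char p q hpq with hpq' | ⟨t, u, hp, hq, hpq'⟩
    · rcases DD_char q r hqr with hqr' | ⟨s, v, hq, hr, hqr'⟩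
      · rw [hpr', hpq', hqr']
        nlinarith [hub_nonneg p, hub_nonneg q, hub_nonneg r]
      · -- q r same pair
        rw [hpr', hpq', hqr']
        have hr' : hub r ≤ s.1.1 := by rw [hr]; exact hub_le_a s (!v)
        nlinarith [hub_nonneg p, hub_nonneg q]
    · -- p q same pair t: then q, r not a pair (r ≠ p)
      have hqr' : DD q r = hub q + hub r := by
        rcases DD_char q r hqr with h' | ⟨s, v, hq2, hr2, h'⟩
        · exact h'
        · exfalso
          rw [hq, Option.some.injEq, Prod.mk.injEq] at hq2
          obtain ⟨rfl, rfl⟩ := hq2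
          rw [Bool.not_not] at hr2
          exact hpr (hp.trans hr2.symm)
      rw [hpr', hpq', hqr']
      have hp' : hub p ≤ t.1.1 := by rw [hp]; exact hub_le_a t u
      nlinarith [hub_nonneg q, a_pos t]
  · -- p r same pair t
    have hpq' : DD p q = hub p + hub q := by
      rcases DD_char p q hpq with h' | ⟨s, v, hp2, hq2, h'⟩
      · exact h'
      · exfalso
        rw [hp, Option.some.injEq, Prod.mk.injEq] at hp2
        obtain ⟨rfl, rfl⟩ := hp2
        exact hqr (hq2.trans hr.symm)
    have hqr' : DD q r = hub q + hub r := by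
      rcases DD_char q r hqr with h' | ⟨s, v, hq2, hr2, h'⟩
      · exact h'
      · exfalso
        rw [hr, Option.some.injEq, Prod.mk.injEq] at hr2
        obtain ⟨rfl, hv⟩ := hr2
        have : v = u := by cases v <;> cases u <;> simp_all
        subst this
        exact hpq (hp.trans hq2.symm)
    rw [hpr', hpq', hqr', hp, hr]
    have := a_le hK t u
    nlinarith [hub_nonneg q]

end UCSB


/-- A function turning every strong b-metric space with fixed
constant `K` into a b-metric space admits a uniform constant `K'`. -/
theorem uniform_constant_S_to_B (K : ℝ) (hK : 1 ≤ K) (f : ℝ → ℝ)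
    (hf : ∀ x : ℝ, 0 ≤ x → 0 ≤ f x)
    (hpres : ∀ (α : Type) (X : Set α) (d : α → α → ℝ), X.Nonempty →
      IsStrongBMetricOn X d K →
        IsSemimetricOn X (fun x y => f (d x y)) ∧
        ∃ K' : ℝ, IsBMetricOn X (fun x y => f (d x y)) K') :
    ∃ K' : ℝ, 1 ≤ K' ∧
      (∀ a b c : ℝ, IsStrongTriangleTriplet K a b c →
        FormsTriangleTriplet K' (f a) (f b) (f c)) ∧
      (∀ (α : Type) (X : Set α) (d : α → α → ℝ), X.Nonempty →
        IsStrongBMetricOn X d K →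
          IsBMetricOn X (fun x y => f (d x y)) K') := by
  classical
  have hstrong : IsStrongBMetricOn (Set.univ : Set (UCSB.Pt K)) UCSB.DD K :=
    ⟨⟨fun x _ y _ => UCSB.DD_nonneg x y, fun x _ y _ => UCSB.DD_eq_zero_iff x y,
      fun x _ y _ => UCSB.DD_symm x y⟩, hK, fun x _ y _ z _ => UCSB.DD_strong hK x y z⟩
  obtain ⟨hsemi, K', hBM⟩ := hpres (UCSB.Pt K) Set.univ UCSB.DD ⟨none, trivial⟩ hstrong
  obtain ⟨_, hK', htri⟩ := hBM
  have hf0 : f 0 = 0 := by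
    have := (hsemi.2.1 none trivial none trivial).mpr rfl
    simpa [UCSB.DD_self] using this
  have partA : ∀ a b c : ℝ, IsStrongTriangleTriplet K a b c →
      FormsTriangleTriplet K' (f a) (f b) (f c) := by
    intro a b c hstt
    obtain ⟨hba, hcb, hc0, hin⟩ := hstt
    rcases hc0.lt_or_eq with hc | hc
    · set t : UCSB.TT K := ⟨(a, b, c), ⟨hba, hcb, hc0, hin⟩, hc⟩ with ht
      have e1 : UCSB.DD (some (t, true)) (some (t, false)) = a :=
        UCSB.DD_pair' t true false (by simp)
      have e1' : UCSB.DD (some (t, false)) (some (t, true)) = a :=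
        UCSB.DD_pair' t false true (by simp)
      have e2 : UCSB.DD (some (t, true)) none = b := UCSB.DD_none_right _
      have e2' : UCSB.DD none (some (t, true)) = b := UCSB.DD_none_left _
      have e3 : UCSB.DD none (some (t, false)) = c := UCSB.DD_none_left _
      have e3' : UCSB.DD (some (t, false)) none = c := UCSB.DD_none_right _
      have h1 : f a ≤ K' * (f b + f c) := by
        have := htri (some (t, true)) trivial none trivial (some (t, false)) trivial
        simpa only [e1, e2, e3] using this
      have h2 : f b ≤ K' * (f a + f c) := by
        have := htri (some (t, true)) trivial (some (t, false)) trivial none trivial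
        simpa only [e2, e1, e3'] using this
      have h3 : f c ≤ K' * (f a + f b) := by
        have := htri none trivial (some (t, true)) trivial (some (t, false)) trivial
        simp only [e3, e2', e1] at this
        linarith [this]
      have h3' : f c ≤ K' * (f a + f b) := h3
      exact UCSB.forms_of_all K' (f a) (f b) (f c) hK' (hf a (by linarith))
        (hf b (by linarith)) (hf c hc0) h1 h2 h3
    · have hc' : c = 0 := hc.symm
      subst hc'
      have hKc : K * (0:ℝ) = 0 := mul_zero K
      have hab : a = b := le_antisymm (by linarith) hba
      have hb0 : 0 ≤ b := hcb
      refine ⟨f a, f b, 0, by rw [hf0], le_of_eq (congrArg f hab).symm, hf b hb0, le_rfl, ?_⟩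
      have hfa : 0 ≤ f a := hf a (by linarith)
      rw [congrArg f hab]
      nlinarith [hf b hb0]
  refine ⟨K', hK', partA, ?_⟩
  intro β X d hne hd
  obtain ⟨hsemi2, _⟩ := hpres β X d hne hd
  obtain ⟨⟨hnn, heq0, hsym⟩, hK1, hstr⟩ := hd
  refine ⟨hsemi2, hK', ?_⟩
  intro x hx y hy z hz
  have ha0 : 0 ≤ d x z := hnn x hx z hz
  have hb0 : 0 ≤ d x y := hnn x hx y hy
  have hc0 : 0 ≤ d y z := hnn y hy z hz
  have i1 : d x z ≤ K * d x y + d y z := hstr x hx y hy z hz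
  have i2 : d x z ≤ K * d y z + d x y := by
    have := hstr z hz y hy x hx
    rwa [hsym z hz x hx, hsym z hz y hy, hsym y hy x hx] at this
  have i3 : d x y ≤ K * d x z + d y z := by
    have := hstr x hx z hz y hy
    rwa [hsym z hz y hy] at this
  have i4 : d x y ≤ K * d y z + d x z := by
    have := hstr y hy z hz x hx
    rwa [hsym y hy x hx, hsym z hz x hx] at this
  have i5 : d y z ≤ K * d x y + d x z := by
    have := hstr y hy x hx z hz
    rwa [hsym y hy x hx] at this
  have i6 : d y z ≤ K * d x z + d x y := by
    have := hstr z hz x hx y hy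
    rwa [hsym z hz y hy, hsym z hz x hx] at this
  show f (d x z) ≤ K' * (f (d x y) + f (d y z))
  rcases le_total (d x z) (d x y) with hab | hab <;>
    rcases le_total (d x y) (d y z) with hbc | hbc <;>
      rcases le_total (d x z) (d y z) with hac | hac
  · exact UCSB.extract K' (f (d y z)) (f (d x y)) (f (d x z)) _ _ _ hK'
      (UCSB.mrev _ _ _) (partA _ _ _ ⟨hbc, hab, ha0, i6⟩)
  · exact UCSB.extract K' (f (d y z)) (f (d x y)) (f (d x z)) _ _ _ hK'
      (UCSB.mrev _ _ _) (partA _ _ _ ⟨hbc, hab, ha0, i6⟩)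
  · exact UCSB.extract K' (f (d x y)) (f (d y z)) (f (d x z)) _ _ _ hK'
      (UCSB.mrot _ _ _) (partA _ _ _ ⟨hbc, hac, ha0, i3⟩)
  · exact UCSB.extract K' (f (d x y)) (f (d x z)) (f (d y z)) _ _ _ hK'
      (UCSB.mswap12 _ _ _) (partA _ _ _ ⟨hab, hac, hc0, i4⟩)
  · exact UCSB.extract K' (f (d y z)) (f (d x z)) (f (d x y)) _ _ _ hK'
      (UCSB.mrot2 _ _ _) (partA _ _ _ ⟨hac, hab, hb0, i5⟩)
  · exact UCSB.extract K' (f (d x z)) (f (d y z)) (f (d x y)) _ _ _ hK'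
      (UCSB.mswap23 _ _ _) (partA _ _ _ ⟨hac, hbc, hb0, i1⟩)
  · exact UCSB.extract K' (f (d x z)) (f (d x y)) (f (d y z)) _ _ _ hK'
      rfl (partA _ _ _ ⟨hab, hbc, hc0, i2⟩)
  · exact UCSB.extract K' (f (d x z)) (f (d x y)) (f (d y z)) _ _ _ hK'
      rfl (partA _ _ _ ⟨hab, hbc, hc0, i2⟩)
end

section
/- Let f : [0,∞) → [0,∞) be amenable. Then the following are equivalent: (i) for every b-metric space (X,d), f∘d is a semimetric and (X, f∘d) is a b-metric space; (ii) for every metric space (X,d), f∘d is a semimetric and (X, f∘d) is a b-metric space; (iii) there exists K ≥ 1 such that for every triangle triplet (a,b,c), the values f(a), f(b), f(c) can be arranged into a K-triangle triplet. (In particular the class of b-metric-preserving functions equals the class of metric-to-b-metric-preserving functions.) -/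
theorem formsTriangleTriplet_iff {K x y z : ℝ} (hK : 0 ≤ K) :
    FormsTriangleTriplet K x y z ↔
      0 ≤ x ∧ 0 ≤ y ∧ 0 ≤ z ∧ x ≤ K * (y + z) ∧ y ≤ K * (x + z) ∧ z ≤ K * (x + y) := by
  constructor
  · rintro ⟨a, b, c, hm, hba, hcb, hc, habc⟩
    have hsum : x + y + z = a + b + c := by
      simpa [add_assoc] using congrArg Multiset.sum hm.symm
    have hbound : ∀ w ∈ ({a, b, c} : Multiset ℝ), 0 ≤ w ∧ w ≤ a := by
      simp only [Multiset.insert_eq_cons, Multiset.mem_cons, Multiset.mem_singleton]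
      rintro w (rfl | rfl | rfl) <;> constructor <;> linarith
    rw [hm] at hbound
    simp only [Multiset.insert_eq_cons, Multiset.mem_cons, Multiset.mem_singleton,
      forall_eq_or_imp, forall_eq] at hbound
    obtain ⟨⟨hx, hxa⟩, ⟨hy, hya⟩, ⟨hz, hza⟩⟩ := hbound
    -- each value is at most the largest one `a`, and the other two sum to at least `b + c`
    have key : ∀ w, w ≤ a → w ≤ K * (x + y + z - w) := fun w hw =>
      hw.trans (habc.trans (mul_le_mul_of_nonneg_left (by linarith) hK))
    refine ⟨hx, hy, hz, ?_, ?_, ?_⟩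
    · convert key x hxa using 2; ring
    · convert key y hya using 2; ring
    · convert key z hza using 2; ring
  · rintro ⟨hx, hy, hz, hxyz, hyxz, hzxy⟩
    rcases le_total y x with hyx | hxy <;> rcases le_total z y with hzy | hyz <;>
      rcases le_total z x with hzx | hxz
    all_goals first
      | exact ⟨x, y, z, rfl, by linarith, by linarith, by linarith, by linarith⟩
      | refine ⟨x, z, y, ?_, by linarith, by linarith, by linarith, by linarith⟩
      | refine ⟨y, x, z, ?_, by linarith, by linarith, by linarith, by linarith⟩
      | refine ⟨y, z, x, ?_, by linarith, by linarith, by linarith, by linarith⟩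
      | refine ⟨z, x, y, ?_, by linarith, by linarith, by linarith, by linarith⟩
      | refine ⟨z, y, x, ?_, by linarith, by linarith, by linarith, by linarith⟩
    all_goals simp only [Multiset.insert_eq_cons, ← Multiset.cons_zero, Multiset.cons_swap]

section Spaces

variable {α : Type} {X : Set α} {d : α → α → ℝ}

theorem IsMetricOn.isBMetricOn (hd : IsMetricOn X d) : IsBMetricOn X d 1 :=
  ⟨hd.1, le_rfl, fun x hx y hy z hz => by simpa using hd.2 x hx y hy z hz⟩

theorem isMetricOn_dist [MetricSpace α] (X : Set α) : IsMetricOn X dist :=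
  ⟨⟨fun _ _ _ _ => dist_nonneg, fun _ _ _ _ => dist_eq_zero, fun x _ y _ => dist_comm x y⟩,
    fun x _ y _ z _ => dist_triangle x y z⟩

theorem IsSemimetricOn.comp {f : ℝ → ℝ} (hf : ∀ t, 0 ≤ t → 0 ≤ f t)
    (hamen : ∀ t, 0 ≤ t → (f t = 0 ↔ t = 0)) (hd : IsSemimetricOn X d) :
    IsSemimetricOn X (fun x y => f (d x y)) := by
  obtain ⟨hnonneg, hzero, hsymm⟩ := hd
  refine ⟨fun x hx y hy => hf _ (hnonneg x hx y hy), fun x hx y hy => ?_,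
    fun x hx y hy => congrArg f (hsymm x hx y hy)⟩
  rw [hamen _ (hnonneg x hx y hy), hzero x hx y hy]

theorem IsBMetricOn.formsTriangleTriplet {K : ℝ} (hd : IsBMetricOn X d K)
    {x y z : α} (hx : x ∈ X) (hy : y ∈ X) (hz : z ∈ X) :
    FormsTriangleTriplet K (d x z) (d x y) (d y z) := by
  obtain ⟨⟨hnonneg, -, hsymm⟩, hK, htri⟩ := hd
  refine (formsTriangleTriplet_iff (by linarith)).2 ⟨hnonneg x hx z hz, hnonneg x hx y hy,
    hnonneg y hy z hz, htri x hx y hy z hz, ?_, ?_⟩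
  · simpa [hsymm z hz y hy] using htri x hx z hz y hy
  · simpa [hsymm y hy x hx, add_comm] using htri y hy x hx z hz

end Spaces

theorem exists_prod_dist_eq_of_isTriangleTriplet {a b c : ℝ} (h : IsTriangleTriplet 1 a b c) :
    ∃ x y z : ℝ × ℝ, dist x z = a ∧ dist x y = b ∧ dist y z = c := by
  obtain ⟨hba, hcb, hc, habc⟩ := h
  refine ⟨(0, b), (b, 0), (a, c), ?_, ?_, ?_⟩ <;>
    simp only [Prod.dist_eq, Real.dist_eq] <;> grind

theorem formsTriangleTriplet_of_isBMetricOn_comp_dist {f : ℝ → ℝ} {K : ℝ}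
    (hf : IsBMetricOn (Set.univ : Set (ℝ × ℝ)) (fun x y => f (dist x y)) K)
    {a b c : ℝ} (h : IsTriangleTriplet 1 a b c) :
    FormsTriangleTriplet K (f a) (f b) (f c) := by
  obtain ⟨x, y, z, rfl, rfl, rfl⟩ := exists_prod_dist_eq_of_isTriangleTriplet h
  exact hf.formsTriangleTriplet trivial trivial trivial

section TripletCondition

variable {f : ℝ → ℝ} {K : ℝ}

theorem le_two_mul_mul_of_le_two_mul (hK : 0 ≤ K)
    (hT : ∀ a b c, IsTriangleTriplet 1 a b c → FormsTriangleTriplet K (f a) (f b) (f c))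
    {a b : ℝ} (ha : 0 ≤ a) (hb : 0 ≤ b) (hab : a ≤ 2 * b) : f a ≤ 2 * K * f b := by
  rcases le_total b a with hba | hab'
  · have := ((formsTriangleTriplet_iff hK).1 (hT a b b ⟨hba, le_rfl, hb, by linarith⟩)).2.2.2.1
    linarith
  · have := ((formsTriangleTriplet_iff hK).1 (hT b b a ⟨le_rfl, hab', ha, by linarith⟩)).2.2.2.2.2
    linarith

theorem le_two_mul_pow_mul_of_le_two_pow_mul (hK : 0 ≤ K)
    (hT : ∀ a b c, IsTriangleTriplet 1 a b c → FormsTriangleTriplet K (f a) (f b) (f c))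
    (n : ℕ) {a b : ℝ} (ha : 0 ≤ a) (hb : 0 ≤ b) (hab : a ≤ 2 ^ (n + 1) * b) :
    f a ≤ (2 * K) ^ (n + 1) * f b := by
  induction n generalizing b with
  | zero => simpa using le_two_mul_mul_of_le_two_mul hK hT ha hb (by simpa using hab)
  | succ n ih =>
    have hfab := ih (b := 2 * b) (by positivity) (by rw [pow_succ] at hab; linarith)
    have hfb := le_two_mul_mul_of_le_two_mul hK hT (by positivity) hb le_rfl
    calc f a ≤ (2 * K) ^ (n + 1) * f (2 * b) := hfab
      _ ≤ (2 * K) ^ (n + 1) * (2 * K * f b) := by gcongr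
      _ = (2 * K) ^ (n + 1 + 1) * f b := by ring

theorem IsBMetricOn.comp_of_triangleTriplet {α : Type} {X : Set α} {d : α → α → ℝ} {K₀ : ℝ}
    (hf : ∀ t, 0 ≤ t → 0 ≤ f t) (hamen : ∀ t, 0 ≤ t → (f t = 0 ↔ t = 0)) (hK : 1 ≤ K)
    (hT : ∀ a b c, IsTriangleTriplet 1 a b c → FormsTriangleTriplet K (f a) (f b) (f c))
    (hd : IsBMetricOn X d K₀) : ∃ K', IsBMetricOn X (fun x y => f (d x y)) K' := by
  obtain ⟨hsemi, -, htri⟩ := hd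
  obtain ⟨n, hn⟩ := pow_unbounded_of_one_lt K₀ (by norm_num : (1 : ℝ) < 2)
  refine ⟨(2 * K) ^ (n + 1), hsemi.comp hf hamen, one_le_pow₀ (by linarith),
    fun x hx y hy z hz => ?_⟩
  have hxy := hsemi.1 x hx y hy
  have hyz := hsemi.1 y hy z hz
  have hxz : d x z ≤ 2 ^ (n + 1) * max (d x y) (d y z) := by
    calc d x z ≤ K₀ * (d x y + d y z) := htri x hx y hy z hz
      _ ≤ 2 ^ n * (2 * max (d x y) (d y z)) := by
        gcongr
        linarith [le_max_left (d x y) (d y z), le_max_right (d x y) (d y z)]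
      _ = 2 ^ (n + 1) * max (d x y) (d y z) := by ring
  have hmax : f (max (d x y) (d y z)) ≤ f (d x y) + f (d y z) := by
    rcases max_choice (d x y) (d y z) with h | h <;> rw [h] <;>
      linarith [hf _ hxy, hf _ hyz]
  calc f (d x z) ≤ (2 * K) ^ (n + 1) * f (max (d x y) (d y z)) :=
        le_two_mul_pow_mul_of_le_two_pow_mul (by linarith) hT n (hsemi.1 x hx z hz)
          (le_max_of_le_left hxy) hxz
    _ ≤ (2 * K) ^ (n + 1) * (f (d x y) + f (d y z)) := by gcongr

end TripletCondition

/-- For amenable `f`, being b-metric-preserving, being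
metric-to-b-metric-preserving, and the `K`-triangle-triplet condition on
triangle triplets are all equivalent. -/
theorem bmetric_preserving_characterization (f : ℝ → ℝ)
    (hf : ∀ x : ℝ, 0 ≤ x → 0 ≤ f x)
    (hamen : ∀ x : ℝ, 0 ≤ x → (f x = 0 ↔ x = 0)) :
    ((∀ (α : Type) (X : Set α) (d : α → α → ℝ), X.Nonempty →
        (∃ K : ℝ, IsBMetricOn X d K) →
          IsSemimetricOn X (fun x y => f (d x y)) ∧
          ∃ K' : ℝ, IsBMetricOn X (fun x y => f (d x y)) K') ↔
      (∃ K : ℝ, 1 ≤ K ∧ ∀ a b c : ℝ, IsTriangleTriplet 1 a b c →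
        FormsTriangleTriplet K (f a) (f b) (f c))) ∧
    ((∀ (α : Type) (X : Set α) (d : α → α → ℝ), X.Nonempty →
        IsMetricOn X d →
          IsSemimetricOn X (fun x y => f (d x y)) ∧
          ∃ K' : ℝ, IsBMetricOn X (fun x y => f (d x y)) K') ↔
      (∃ K : ℝ, 1 ≤ K ∧ ∀ a b c : ℝ, IsTriangleTriplet 1 a b c →
        FormsTriangleTriplet K (f a) (f b) (f c))) := by
  have triplet_of_metric : (∀ (α : Type) (X : Set α) (d : α → α → ℝ), X.Nonempty →
      IsMetricOn X d → IsSemimetricOn X (fun x y => f (d x y)) ∧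
        ∃ K' : ℝ, IsBMetricOn X (fun x y => f (d x y)) K') →
      ∃ K : ℝ, 1 ≤ K ∧ ∀ a b c : ℝ, IsTriangleTriplet 1 a b c →
        FormsTriangleTriplet K (f a) (f b) (f c) := fun h => by
    obtain ⟨-, K, hK⟩ := h (ℝ × ℝ) Set.univ dist ⟨0, trivial⟩ (isMetricOn_dist _)
    exact ⟨K, hK.2.1, fun a b c => formsTriangleTriplet_of_isBMetricOn_comp_dist hK⟩
  have bMetric_of_triplet : (∃ K : ℝ, 1 ≤ K ∧ ∀ a b c : ℝ, IsTriangleTriplet 1 a b c →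
        FormsTriangleTriplet K (f a) (f b) (f c)) →
      ∀ (α : Type) (X : Set α) (d : α → α → ℝ), X.Nonempty → (∃ K : ℝ, IsBMetricOn X d K) →
        IsSemimetricOn X (fun x y => f (d x y)) ∧
          ∃ K' : ℝ, IsBMetricOn X (fun x y => f (d x y)) K' :=
    fun ⟨_, hK, hT⟩ _ _ _ _ ⟨_, hd⟩ => ⟨hd.1.comp hf hamen, hd.comp_of_triangleTriplet hf hamen hK hT⟩
  exact ⟨⟨fun h => triplet_of_metric fun α X d hX hd => h α X d hX ⟨1, hd.isBMetricOn⟩,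
      bMetric_of_triplet⟩,
    ⟨triplet_of_metric, fun hT α X d hX hd => bMetric_of_triplet hT α X d hX ⟨1, hd.isBMetricOn⟩⟩⟩
end

section
/- Let f : [0,∞) → [0,∞) be amenable. Then f is (S)-preserving (i.e., for every strong b-metric space (X,d), f∘d is a semimetric and (X, f∘d) is a strong b-metric space) if and only if for every K₁ ≥ 1 there exists K₂ ≥ 1 such that for every strong K₁-triangle triplet (a,b,c), the values f(a), f(b), f(c) can be arranged into a strong K₂-triangle triplet. -/
namespace SPC

lemma p213 (a b c : ℝ) : ({b,a,c}:Multiset ℝ) = {a,b,c} := Multiset.cons_swap _ _ _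
lemma p132 (a b c : ℝ) : ({a,c,b}:Multiset ℝ) = {a,b,c} :=
  Quot.sound (List.Perm.cons a (List.Perm.swap b c []))
lemma p321 (a b c : ℝ) : ({c,b,a}:Multiset ℝ) = {a,b,c} :=
  Quot.sound (((List.Perm.swap b c [a]).trans (List.Perm.cons b (List.Perm.swap a c []))).trans
    (List.Perm.swap a b [c]))
lemma p231 (a b c : ℝ) : ({b,c,a}:Multiset ℝ) = {a,b,c} :=
  Quot.sound ((List.Perm.cons b (List.Perm.swap a c [])).trans (List.Perm.swap a b [c]))
lemma p312 (a b c : ℝ) : ({c,a,b}:Multiset ℝ) = {a,b,c} :=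
  Quot.sound ((List.Perm.swap a c [b]).trans (List.Perm.cons a (List.Perm.swap b c [])))

/-- Sort three values satisfying all six strong inequalities into a strong triplet. -/
lemma msort (K p q r : ℝ) (hp : 0 ≤ p) (hq : 0 ≤ q) (hr : 0 ≤ r)
    (h1 : p ≤ K * q + r) (h2 : p ≤ K * r + q) (h3 : q ≤ K * p + r)
    (h4 : q ≤ K * r + p) (h5 : r ≤ K * p + q) (h6 : r ≤ K * q + p) :
    FormsStrongTriangleTriplet K p q r := by
  rcases le_total q p with hqp | hqp
  · rcases le_total r q with hrq | hrq
    · exact ⟨p, q, r, rfl, hqp, hrq, hr, h2⟩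
    · rcases le_total r p with hrp | hrp
      · exact ⟨p, r, q, p132 _ _ _, hrp, hrq, hq, h1⟩
      · exact ⟨r, p, q, p312 _ _ _, hrp, hqp, hq, h6⟩
  · rcases le_total r p with hrp | hrp
    · exact ⟨q, p, r, p213 _ _ _, hqp, hrp, hr, h4⟩
    · rcases le_total r q with hrq | hrq
      · exact ⟨q, r, p, p231 _ _ _, hrq, hrp, hp, h3⟩
      · exact ⟨r, q, p, p321 _ _ _, hrq, hqp, hp, h5⟩

lemma forms_le (K u v w : ℝ) (hK : 1 ≤ K) (h : FormsStrongTriangleTriplet K u v w) :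
    u ≤ K * v + w := by
  obtain ⟨a, b, c, hm, hba, hcb, hc, hin⟩ := h
  have hb : 0 ≤ b := hc.trans hcb
  have hsum : a + (b + c) = u + (v + w) := by
    have := congrArg Multiset.sum hm; simpa using this
  have hu : u = a ∨ u = b ∨ u = c := by
    have : u ∈ ({a,b,c}:Multiset ℝ) := by rw [hm]; simp
    simpa using this
  have hv : v = a ∨ v = b ∨ v = c := by
    have : v ∈ ({a,b,c}:Multiset ℝ) := by rw [hm]; simp
    simpa using this
  have hvc : c ≤ v := by rcases hv with h|h|h <;> simp [h] <;> linarith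
  have hv0 : 0 ≤ v := hc.trans hvc
  have h9 : K * c + (v - c) ≤ K * v := by
    nlinarith [mul_nonneg (sub_nonneg.2 hK) (sub_nonneg.2 hvc)]
  have h10 : v ≤ K * v := le_mul_of_one_le_left hv0 hK
  rcases hu with h|h|h <;> subst h <;> linarith

lemma forms_mono (K K' u v w : ℝ) (hKK : K ≤ K')
    (h : FormsStrongTriangleTriplet K u v w) : FormsStrongTriangleTriplet K' u v w := by
  obtain ⟨a, b, c, hm, hba, hcb, hc, hin⟩ := h
  exact ⟨a, b, c, hm, hba, hcb, hc, by nlinarith⟩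

/-- A single 3×3 distance matrix. -/
def Mat (a b c : ℝ) : Fin 3 → Fin 3 → ℝ := ![![0, a, b], ![a, 0, c], ![b, c, 0]]

lemma Mat_nonneg (a b c : ℝ) (hc : 0 ≤ c) (hcb : c ≤ b) (hba : b ≤ a) (i j : Fin 3) :
    0 ≤ Mat a b c i j := by
  fin_cases i <;> fin_cases j <;> simp [Mat] <;> linarith

lemma Mat_le (a b c : ℝ) (hc : 0 ≤ c) (hcb : c ≤ b) (hba : b ≤ a) (i j : Fin 3) :
    Mat a b c i j ≤ a := by
  fin_cases i <;> fin_cases j <;> simp [Mat] <;> linarith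

lemma Mat_symm (a b c : ℝ) (i j : Fin 3) : Mat a b c i j = Mat a b c j i := by
  fin_cases i <;> fin_cases j <;> simp [Mat]

lemma Mat_eq_zero (a b c : ℝ) (hc : 0 < c) (hcb : c ≤ b) (hba : b ≤ a) (i j : Fin 3) :
    Mat a b c i j = 0 ↔ i = j := by
  fin_cases i <;> fin_cases j <;> simp [Mat] <;> linarith

lemma Mat_tri (a b c K : ℝ) (hc : 0 ≤ c) (hcb : c ≤ b) (hba : b ≤ a) (hK : 1 ≤ K)
    (htri : a ≤ K * c + b) (i j l : Fin 3) :
    Mat a b c i l ≤ K * Mat a b c i j + Mat a b c j l := by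
  fin_cases i <;> fin_cases j <;> fin_cases l <;> simp [Mat] <;> nlinarith

/-- The disjoint union of 3-point blocks. -/
def D (a b c : ℕ → ℝ) : ℕ × Fin 3 → ℕ × Fin 3 → ℝ :=
  fun p q => if p.1 = q.1 then Mat (a p.1) (b p.1) (c p.1) p.2 q.2 else a p.1 + a q.1

lemma D_strong (K : ℝ) (hK : 1 ≤ K) (a b c : ℕ → ℝ)
    (hba : ∀ n, b n ≤ a n) (hcb : ∀ n, c n ≤ b n) (hc : ∀ n, 0 < c n)
    (htri : ∀ n, a n ≤ K * c n + b n) :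
    IsStrongBMetricOn Set.univ (D a b c) K := by
  have ha : ∀ n, 0 < a n := fun n => (hc n).trans_le ((hcb n).trans (hba n))
  refine ⟨⟨?_, ?_, ?_⟩, hK, ?_⟩
  · rintro ⟨n, i⟩ - ⟨m, j⟩ -
    by_cases h : n = m
    · subst h
      simpa [D] using Mat_nonneg _ _ _ (hc n).le (hcb n) (hba n) i j
    · simp only [D, if_neg h]
      have := (ha n).le; have := (ha m).le; linarith
  · rintro ⟨n, i⟩ - ⟨m, j⟩ -
    by_cases h : n = m
    · subst h
      simp only [D, if_pos rfl, if_true]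
      rw [Mat_eq_zero _ _ _ (hc n) (hcb n) (hba n)]
      constructor
      · rintro rfl; rfl
      · intro h; exact (Prod.ext_iff.1 h).2
    · simp only [D, if_neg h]
      constructor
      · intro h0; exfalso; have := ha n; have := ha m; linarith
      · intro h0; exact absurd (Prod.ext_iff.1 h0).1 h
  · rintro ⟨n, i⟩ - ⟨m, j⟩ -
    by_cases h : n = m
    · subst h
      simp only [D, if_pos rfl, if_true]
      exact Mat_symm _ _ _ i j
    · have h' : ¬ (m = n) := fun hh => h hh.symm
      simp only [D, if_neg h, if_neg h']
      ring
  · rintro ⟨n, i⟩ - ⟨m, j⟩ - ⟨k, l⟩ -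
    by_cases hnk : n = k
    · subst hnk
      by_cases hnm : n = m
      · subst hnm
        simp only [D, if_pos rfl, if_true]
        exact Mat_tri _ _ _ K (hc n).le (hcb n) (hba n) hK (htri n) i j l
      · have h' : ¬ (m = n) := fun hh => hnm hh.symm
        simp only [D, if_pos rfl, if_true, if_neg hnm, if_neg h']
        have h1 := Mat_le (a n) (b n) (c n) (hc n).le (hcb n) (hba n) i l
        nlinarith [(ha n).le, (ha m).le]
    · by_cases hnm : n = m
      · subst hnm
        simp only [D, if_pos rfl, if_true, if_neg hnk]
        have h1 := Mat_nonneg (a n) (b n) (c n) (hc n).le (hcb n) (hba n) i j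
        nlinarith [(ha n).le, (ha k).le]
      · by_cases hmk : m = k
        · subst hmk
          simp only [D, if_pos rfl, if_true, if_neg hnk, if_neg hnm]
          have h1 := Mat_nonneg (a m) (b m) (c m) (hc m).le (hcb m) (hba m) j l
          nlinarith [(ha n).le, (ha m).le]
        · simp only [D, if_neg hnk, if_neg hnm, if_neg hmk]
          nlinarith [(ha n).le, (ha m).le, (ha k).le, hK]

end SPC

/-- Characterization of (S)-preserving functions via triplets. -/
theorem S_preserving_characterization (f : ℝ → ℝ)
    (hf : ∀ x : ℝ, 0 ≤ x → 0 ≤ f x)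
    (hamen : ∀ x : ℝ, 0 ≤ x → (f x = 0 ↔ x = 0)) :
    (∀ (α : Type) (X : Set α) (d : α → α → ℝ), X.Nonempty →
        (∃ K : ℝ, IsStrongBMetricOn X d K) →
          IsSemimetricOn X (fun x y => f (d x y)) ∧
          ∃ K' : ℝ, IsStrongBMetricOn X (fun x y => f (d x y)) K') ↔
    (∀ K₁ : ℝ, 1 ≤ K₁ → ∃ K₂ : ℝ, 1 ≤ K₂ ∧
      ∀ a b c : ℝ, IsStrongTriangleTriplet K₁ a b c →
        FormsStrongTriangleTriplet K₂ (f a) (f b) (f c)) := by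
  constructor
  · -- forward direction
    intro hS K₁ hK₁
    by_contra hcon
    push_neg at hcon
    choose a b c htrip hfail using fun n : ℕ =>
      hcon ((n : ℝ) + 1) (by have := Nat.cast_nonneg (α := ℝ) n; linarith)
    have f0 : f 0 = 0 := (hamen 0 le_rfl).2 rfl
    have hba : ∀ n, b n ≤ a n := fun n => (htrip n).1
    have hcb : ∀ n, c n ≤ b n := fun n => (htrip n).2.1
    have hc0 : ∀ n, 0 ≤ c n := fun n => (htrip n).2.2.1
    have hin : ∀ n, a n ≤ K₁ * c n + b n := fun n => (htrip n).2.2.2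
    have hcpos : ∀ n, 0 < c n := by
      intro n
      rcases (hc0 n).lt_or_eq with h | h
      · exact h
      · exfalso
        apply hfail n
        have hcn : c n = 0 := h.symm
        have hab : a n = b n := le_antisymm (by have := hin n; rw [hcn] at this; linarith) (hba n)
        have hfc : f (c n) = 0 := by rw [hcn]; exact f0
        have hfab : f (a n) = f (b n) := by rw [hab]
        refine ⟨f (a n), f (b n), f (c n), rfl, le_of_eq hfab.symm, ?_, ?_, ?_⟩
        · rw [hfc]; exact hf _ (by have := hba n; have := hc0 n; have := hcb n; linarith)
        · rw [hfc]
        · rw [hfc, hfab]; simp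
    have hapos : ∀ n, 0 < a n := fun n => (hcpos n).trans_le ((hcb n).trans (hba n))
    have hd : IsStrongBMetricOn Set.univ (SPC.D a b c) K₁ :=
      SPC.D_strong K₁ hK₁ a b c hba hcb hcpos hin
    obtain ⟨-, K', -, hK'1, hQ⟩ :=
      hS (ℕ × Fin 3) Set.univ (SPC.D a b c) ⟨(0, 0), trivial⟩ ⟨K₁, hd⟩
    set n := ⌈K'⌉₊ with hn
    have hKn : K' ≤ (n : ℝ) + 1 := (Nat.le_ceil K').trans (by linarith)
    apply hfail n
    apply SPC.forms_mono K' _ _ _ _ hKn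
    have key : ∀ i j l : Fin 3,
        f (SPC.Mat (a n) (b n) (c n) i l) ≤
          K' * f (SPC.Mat (a n) (b n) (c n) i j) + f (SPC.Mat (a n) (b n) (c n) j l) := by
      intro i j l
      have := hQ (n, i) trivial (n, j) trivial (n, l) trivial
      simpa [SPC.D] using this
    have e1 := key 0 2 1
    have e2 := key 1 2 0
    have e3 := key 0 1 2
    have e4 := key 2 1 0
    have e5 := key 1 0 2
    have e6 := key 2 0 1
    simp only [SPC.Mat, Matrix.cons_val_zero, Matrix.cons_val_one, Matrix.head_cons,
      Matrix.cons_val_two, Matrix.tail_cons, Matrix.head_fin_const] at e1 e2 e3 e4 e5 e6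
    exact SPC.msort K' _ _ _ (hf _ (hapos n).le)
      (hf _ (by have := hcpos n; have := hcb n; linarith))
      (hf _ (hcpos n).le) e1 e2 e3 e4 e5 e6
  · -- backward direction
    rintro hT α X d hne ⟨K, ⟨hpos, heq, hsym⟩, hK, htri⟩
    obtain ⟨K₂, hK₂, hcond⟩ := hT K hK
    have hsem : IsSemimetricOn X (fun x y => f (d x y)) := by
      refine ⟨fun x hx y hy => hf _ (hpos x hx y hy), fun x hx y hy => ?_, fun x hx y hy => ?_⟩
      · simp only
        rw [hamen _ (hpos x hx y hy)]
        exact heq x hx y hy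
      · simp only
        rw [hsym x hx y hy]
    refine ⟨hsem, K₂, hsem, hK₂, ?_⟩
    intro x hx y hy z hz
    simp only
    have h1 := htri x hx y hy z hz
    have h2 := htri z hz y hy x hx
    have h3 := htri x hx z hz y hy
    have h4 := htri y hy z hz x hx
    have h5 := htri y hy x hx z hz
    have h6 := htri z hz x hx y hy
    have sxz := hsym x hx z hz
    have sxy := hsym x hx y hy
    have syz := hsym y hy z hz
    obtain ⟨A, B, C, hm, ht3⟩ := SPC.msort K (d x z) (d x y) (d y z)
      (hpos x hx z hz) (hpos x hx y hy) (hpos y hy z hz)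
      h1 (by rw [sxz, syz, sxy]; exact h2) (by rw [syz]; exact h3)
      (by rw [sxy, sxz]; exact h4) (by rw [syz, sxz]; exact h6) (by rw [sxy]; exact h5)
    have hmm : ({f A, f B, f C} : Multiset ℝ) = {f (d x z), f (d x y), f (d y z)} := by
      have := congrArg (Multiset.map f) hm; simpa using this
    obtain ⟨a', b', c', hm', ht'⟩ := hcond A B C ht3
    exact SPC.forms_le K₂ _ _ _ hK₂ ⟨a', b', c', hm'.trans hmm, ht'⟩
end

section
/- Let f : [0,∞) → [0,∞) be amenable. Then f is (S)-(B)-preserving (i.e., for every strong b-metric space (X,d), f∘d is a semimetric and (X, f∘d) is a b-metric space) if and only if for every K₁ ≥ 1 there exists K₂ ≥ 1 such that for every strong K₁-triangle triplet (a,b,c), the values f(a), f(b), f(c) can be arranged into a K₂-triangle triplet. -/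
-- permutation transfer
theorem forms_perm {K x y z x' y' z' : ℝ}
    (h : ({x, y, z} : Multiset ℝ) = ({x', y', z'} : Multiset ℝ)) :
    FormsTriangleTriplet K x y z → FormsTriangleTriplet K x' y' z' := by
  rintro ⟨a, b, c, hm, ht⟩
  exact ⟨a, b, c, hm.trans h, ht⟩

theorem ms_swap12_s11 (a b c : ℝ) : ({a,b,c} : Multiset ℝ) = {b,a,c} := Multiset.cons_swap a b {c}
theorem ms_swap23_s11 (a b c : ℝ) : ({a,b,c} : Multiset ℝ) = {a,c,b} :=
  congrArg (a ::ₘ ·) (Multiset.cons_swap b c 0)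
theorem ms_rot_s11 (a b c : ℝ) : ({a,b,c} : Multiset ℝ) = {b,c,a} :=
  (ms_swap12_s11 a b c).trans (ms_swap23_s11 b a c)

-- each element of a formed triplet is ≤ K * (sum of the other two)
theorem forms_bound {K x y z : ℝ} (hK : 1 ≤ K)
    (h : FormsTriangleTriplet K x y z) : x ≤ K * (y + z) := by
  obtain ⟨a, b, c, hm, hba, hcb, hc0, habc⟩ := h
  have hsum : a + b + c = x + y + z := by
    have := congrArg Multiset.sum hm; simp at this; linarith
  have hx : x = a ∨ x = b ∨ x = c := by
    have : x ∈ ({a,b,c} : Multiset ℝ) := hm ▸ (by simp)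
    simpa using this
  have h0b : (0:ℝ) ≤ b := le_trans hc0 hcb
  have h0a : (0:ℝ) ≤ a := le_trans h0b hba
  rcases hx with h | h | h <;> subst h <;> nlinarith [mul_nonneg (by linarith : (0:ℝ) ≤ K - 1) h0a,
    mul_nonneg (by linarith : (0:ℝ) ≤ K - 1) h0b,
    mul_nonneg (by linarith : (0:ℝ) ≤ K) hc0,
    mul_nonneg (by linarith : (0:ℝ) ≤ K) h0b]

-- if u is the max and u ≤ K(v+w) then the triple forms a triplet
theorem forms_of_max {K u v w : ℝ} (hv : v ≤ u) (hw : w ≤ u) (hv0 : 0 ≤ v) (hw0 : 0 ≤ w)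
    (h : u ≤ K * (v + w)) : FormsTriangleTriplet K u v w := by
  rcases le_total w v with h' | h'
  · exact ⟨u, v, w, rfl, hv, h', hw0, h⟩
  · exact ⟨u, w, v, ms_swap23_s11 u w v, hw, h', hv0, by rwa [add_comm w v]⟩

theorem ms_swap13 (a b c : ℝ) : ({a,b,c} : Multiset ℝ) = {c,b,a} :=
  (ms_rot_s11 a b c).trans (ms_swap12_s11 b c a)

set_option maxHeartbeats 1000000

def SBP_dd (A B C : ℕ → ℝ) : (ℕ × Fin 3) → (ℕ × Fin 3) → ℝ := fun p q =>
  if p.1 = q.1 then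
    (if p.2 = q.2 then 0
     else if (p.2 : ℕ) + (q.2 : ℕ) = 1 then A p.1
     else if (p.2 : ℕ) + (q.2 : ℕ) = 2 then B p.1 else C p.1)
  else A p.1 + A q.1 + 1

section
variable (A B C : ℕ → ℝ)

theorem SBP_dd_01 (n : ℕ) : SBP_dd A B C (n, 0) (n, 1) = A n := by norm_num [SBP_dd, Fin.ext_iff]
theorem SBP_dd_02 (n : ℕ) : SBP_dd A B C (n, 0) (n, 2) = B n := by norm_num [SBP_dd, Fin.ext_iff]
theorem SBP_dd_12 (n : ℕ) : SBP_dd A B C (n, 1) (n, 2) = C n := by norm_num [SBP_dd, Fin.ext_iff]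
theorem SBP_dd_10 (n : ℕ) : SBP_dd A B C (n, 1) (n, 0) = A n := by norm_num [SBP_dd, Fin.ext_iff]
theorem SBP_dd_20 (n : ℕ) : SBP_dd A B C (n, 2) (n, 0) = B n := by norm_num [SBP_dd, Fin.ext_iff]
theorem SBP_dd_21 (n : ℕ) : SBP_dd A B C (n, 2) (n, 1) = C n := by norm_num [SBP_dd, Fin.ext_iff]

theorem SBP_dd_cross (n m : ℕ) (h : n ≠ m) (i j : Fin 3) :
    SBP_dd A B C (n, i) (m, j) = A n + A m + 1 := by simp [SBP_dd, h]
end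

theorem SBP_dd_strong (A B C : ℕ → ℝ) (K : ℝ) (hK : 1 ≤ K)
    (hC : ∀ n, 0 < C n) (hCB : ∀ n, C n ≤ B n) (hBA : ∀ n, B n ≤ A n)
    (hT : ∀ n, A n ≤ K * C n + B n) :
    IsStrongBMetricOn Set.univ (SBP_dd A B C) K := by
  have hB : ∀ n, 0 < B n := fun n => lt_of_lt_of_le (hC n) (hCB n)
  have hA : ∀ n, 0 < A n := fun n => lt_of_lt_of_le (hB n) (hBA n)
  have hK0 : (0:ℝ) ≤ K := by linarith
  have hnn : ∀ p q, 0 ≤ SBP_dd A B C p q := by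
    rintro ⟨n, i⟩ ⟨m, j⟩
    by_cases h : n = m
    · subst h; fin_cases i <;> fin_cases j <;> simp [SBP_dd] <;>
        linarith [hA n, hB n, hC n]
    · rw [SBP_dd_cross A B C n m h]; linarith [hA n, hA m]
  have hub : ∀ n i j, SBP_dd A B C (n, i) (n, j) ≤ A n := by
    intro n i j
    fin_cases i <;> fin_cases j <;> simp [SBP_dd] <;>
      linarith [hA n, hB n, hC n, hBA n, hCB n]
  refine ⟨⟨fun x _ y _ => hnn x y, ?_, ?_⟩, hK, ?_⟩
  · rintro ⟨n, i⟩ - ⟨m, j⟩ -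
    by_cases h : n = m
    · subst h
      by_cases hij : i = j
      · subst hij; simp [SBP_dd]
      · have hpos : C n ≤ SBP_dd A B C (n, i) (n, j) := by
          fin_cases i <;> fin_cases j <;> simp_all [SBP_dd] <;>
            linarith [hCB n, hBA n]
        constructor
        · intro hz; exfalso; rw [hz] at hpos; linarith [hC n]
        · intro hz; exact absurd (congrArg Prod.snd hz) hij
    · rw [SBP_dd_cross A B C n m h]
      constructor
      · intro hz; exfalso; linarith [hA n, hA m]
      · intro hz; exact absurd (congrArg Prod.fst hz) h
  · rintro ⟨n, i⟩ - ⟨m, j⟩ -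
    by_cases h : n = m
    · subst h; fin_cases i <;> fin_cases j <;> simp [SBP_dd]
    · rw [SBP_dd_cross A B C n m h, SBP_dd_cross A B C m n (Ne.symm h)]; ring
  · rintro ⟨n, i⟩ - ⟨m, j⟩ - ⟨p, k⟩ -
    have hprod : ∀ r : ℝ, 0 ≤ r → 0 ≤ (K - 1) * r := fun r hr =>
      mul_nonneg (by linarith) hr
    by_cases hnm : n = m
    · subst hnm
      by_cases hnp : n = p
      · subst hnp
        have e1 : K * C n + B n ≤ K * B n + C n := by
          nlinarith [hprod (B n - C n) (by linarith [hCB n] : (0:ℝ) ≤ B n - C n)]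
        have e2 : A n ≤ K * A n := by nlinarith [hprod (A n) (le_of_lt (hA n))]
        have e3 : B n ≤ K * B n := by nlinarith [hprod (B n) (le_of_lt (hB n))]
        have e4 : C n ≤ K * C n := by nlinarith [hprod (C n) (le_of_lt (hC n))]
        have e5 : (0:ℝ) ≤ K * C n := mul_nonneg hK0 (le_of_lt (hC n))
        have e6 : (0:ℝ) ≤ K * B n := mul_nonneg hK0 (le_of_lt (hB n))
        have e7 : (0:ℝ) ≤ K * A n := mul_nonneg hK0 (le_of_lt (hA n))
        fin_cases i <;> fin_cases j <;> fin_cases k <;> simp [SBP_dd] <;>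
          linarith [hT n, hC n, hCB n, hBA n]
      · rw [SBP_dd_cross A B C n p hnp, SBP_dd_cross A B C n p hnp]
        nlinarith [mul_nonneg hK0 (hnn (n, i) (n, j))]
    · by_cases hmp : m = p
      · subst hmp
        rw [SBP_dd_cross A B C n m hnm, SBP_dd_cross A B C n m hnm]
        nlinarith [hnn (m, j) (m, k), hprod (A n + A m + 1)
          (by nlinarith [hA n, hA m])]
      · by_cases hnp : n = p
        · subst hnp
          rw [SBP_dd_cross A B C n m hnm, SBP_dd_cross A B C m n (Ne.symm hnm)]
          nlinarith [hub n i k, hA m, hA n, hprod (A n + A m + 1)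
            (by nlinarith [hA n, hA m])]
        · rw [SBP_dd_cross A B C n p hnp, SBP_dd_cross A B C n m hnm,
            SBP_dd_cross A B C m p hmp]
          nlinarith [hA m, hA n, hA p, hprod (A n + A m + 1)
            (by nlinarith [hA n, hA m])]

theorem SBP_key_rev (f : ℝ → ℝ) {K K₂ u v w : ℝ} (hK₂ : 1 ≤ K₂)
    (h1 : w ≤ K*u + v) (h2 : w ≤ K*v + u) (h3 : u ≤ K*w + v)
    (h4 : u ≤ K*v + w) (h5 : v ≤ K*u + w) (h6 : v ≤ K*w + u)
    (h0u : 0 ≤ u) (h0v : 0 ≤ v) (h0w : 0 ≤ w)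
    (hforms : ∀ a b c, IsStrongTriangleTriplet K a b c →
      FormsTriangleTriplet K₂ (f a) (f b) (f c)) :
    f w ≤ K₂ * (f u + f v) := by
  have key : ∃ a b c : ℝ, ({a,b,c} : Multiset ℝ) = ({w,u,v} : Multiset ℝ) ∧
      IsStrongTriangleTriplet K a b c := by
    rcases le_total u v with huv | huv
    · rcases le_total v w with hvw | hvw
      · exact ⟨w, v, u, ms_swap23_s11 w v u, hvw, huv, h0u, h1⟩
      · rcases le_total u w with huw | huw
        · exact ⟨v, w, u, ms_rot_s11 v w u, hvw, huw, h0u, h5⟩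
        · exact ⟨v, u, w, ms_swap13 v u w, huv, huw, h0w, h6⟩
    · rcases le_total u w with huw | huw
      · exact ⟨w, u, v, rfl, huw, huv, h0v, h2⟩
      · rcases le_total v w with hvw | hvw
        · exact ⟨u, w, v, ms_swap12_s11 u w v, huw, hvw, h0v, h4⟩
        · exact ⟨u, v, w, (ms_rot_s11 w u v).symm, huv, hvw, h0w, h3⟩
  obtain ⟨a, b, c, hm, ht⟩ := key
  have hm' : ({f a, f b, f c} : Multiset ℝ) = ({f w, f u, f v} : Multiset ℝ) := by
    have := congrArg (Multiset.map f) hm; simpa using this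
  exact forms_bound hK₂ (forms_perm hm' (hforms a b c ht))


/-- Characterization of (S)-(B)-preserving functions via triplets. -/
theorem S_to_B_preserving_characterization (f : ℝ → ℝ)
    (hf : ∀ x : ℝ, 0 ≤ x → 0 ≤ f x)
    (hamen : ∀ x : ℝ, 0 ≤ x → (f x = 0 ↔ x = 0)) :
    (∀ (α : Type) (X : Set α) (d : α → α → ℝ), X.Nonempty →
        (∃ K : ℝ, IsStrongBMetricOn X d K) →
          IsSemimetricOn X (fun x y => f (d x y)) ∧
          ∃ K' : ℝ, IsBMetricOn X (fun x y => f (d x y)) K') ↔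
    (∀ K₁ : ℝ, 1 ≤ K₁ → ∃ K₂ : ℝ, 1 ≤ K₂ ∧
      ∀ a b c : ℝ, IsStrongTriangleTriplet K₁ a b c →
        FormsTriangleTriplet K₂ (f a) (f b) (f c)) := by
  constructor
  · -- forward
    intro hpres K₁ hK₁
    by_contra hcon
    push_neg at hcon
    have hcon' : ∀ n : ℕ, ∃ a b c : ℝ, IsStrongTriangleTriplet K₁ a b c ∧
        ¬ FormsTriangleTriplet ((n:ℝ)+1) (f a) (f b) (f c) := by
      intro n
      exact hcon ((n:ℝ)+1) (by have := Nat.cast_nonneg (α := ℝ) n; linarith)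
    choose A B C hst hbad using hcon'
    have hBA : ∀ n, B n ≤ A n := fun n => (hst n).1
    have hCB : ∀ n, C n ≤ B n := fun n => (hst n).2.1
    have h0C : ∀ n, 0 ≤ C n := fun n => (hst n).2.2.1
    have hT : ∀ n, A n ≤ K₁ * C n + B n := fun n => (hst n).2.2.2
    have hfC0 : ∀ n, 0 ≤ f (C n) := fun n => hf _ (h0C n)
    have hfB0 : ∀ n, 0 ≤ f (B n) := fun n => hf _ (le_trans (h0C n) (hCB n))
    have hfA0 : ∀ n, 0 ≤ f (A n) := fun n =>
      hf _ (le_trans (le_trans (h0C n) (hCB n)) (hBA n))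
    have hCpos : ∀ n, 0 < C n := by
      intro n
      rcases lt_or_eq_of_le (h0C n) with h | h
      · exact h
      · exfalso
        apply hbad n
        have hC0 : C n = 0 := h.symm
        have hAB : A n = B n := by
          refine le_antisymm ?_ (hBA n)
          have := hT n; rw [hC0] at this; nlinarith
        have hf0 : f (C n) = 0 := by rw [hC0]; exact (hamen 0 le_rfl).mpr rfl
        refine ⟨f (A n), f (B n), f (C n), rfl,
          le_of_eq (congrArg f hAB).symm, by rw [hf0]; exact hfB0 n,
          le_of_eq hf0.symm, ?_⟩
        rw [hf0, hAB]
        nlinarith [hfB0 n, Nat.cast_nonneg (α := ℝ) n]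
    have hsm := SBP_dd_strong A B C K₁ hK₁ hCpos hCB hBA hT
    obtain ⟨-, K', ⟨-, hK'1, htri⟩⟩ :=
      hpres (ℕ × Fin 3) Set.univ (SBP_dd A B C) ⟨(0, 0), trivial⟩ ⟨K₁, hsm⟩
    set n : ℕ := ⌈K'⌉₊ with hn
    have hKn : K' ≤ (n:ℝ) + 1 := by
      have := Nat.le_ceil K'; rw [← hn] at this; linarith
    have h1 := htri (n,0) (Set.mem_univ _) (n,2) (Set.mem_univ _) (n,1) (Set.mem_univ _)
    have h2 := htri (n,0) (Set.mem_univ _) (n,1) (Set.mem_univ _) (n,2) (Set.mem_univ _)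
    have h3 := htri (n,1) (Set.mem_univ _) (n,0) (Set.mem_univ _) (n,2) (Set.mem_univ _)
    simp only [SBP_dd_01, SBP_dd_02, SBP_dd_12, SBP_dd_10, SBP_dd_20, SBP_dd_21] at h1 h2 h3
    -- h1 : f (A n) ≤ K' * (f (B n) + f (C n))
    -- h2 : f (B n) ≤ K' * (f (A n) + f (C n))
    -- h3 : f (C n) ≤ K' * (f (A n) + f (B n))
    apply hbad n
    have hd : (0:ℝ) ≤ (n:ℝ) + 1 - K' := by linarith
    have m1 : (0:ℝ) ≤ ((n:ℝ) + 1 - K') * (f (B n) + f (C n)) :=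
      mul_nonneg hd (by linarith [hfB0 n, hfC0 n])
    have m2 : (0:ℝ) ≤ ((n:ℝ) + 1 - K') * (f (A n) + f (B n)) :=
      mul_nonneg hd (by linarith [hfA0 n, hfB0 n])
    have m3 : (0:ℝ) ≤ ((n:ℝ) + 1 - K') * (f (A n) + f (C n)) :=
      mul_nonneg hd (by linarith [hfA0 n, hfC0 n])
    rcases le_total (f (B n)) (f (A n)) with c1 | c1
    · rcases le_total (f (C n)) (f (A n)) with c2 | c2
      · exact forms_of_max c1 c2 (hfB0 n) (hfC0 n) (by nlinarith [m1])
      · exact forms_perm (ms_rot_s11 (f (C n)) (f (A n)) (f (B n)))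
          (forms_of_max c2 (c1.trans c2) (hfA0 n) (hfB0 n) (by nlinarith [m2]))
    · rcases le_total (f (C n)) (f (B n)) with c2 | c2
      · exact forms_perm (ms_swap12_s11 (f (B n)) (f (A n)) (f (C n)))
          (forms_of_max c1 c2 (hfA0 n) (hfC0 n) (by nlinarith [m3]))
      · exact forms_perm (ms_rot_s11 (f (C n)) (f (A n)) (f (B n)))
          (forms_of_max (c1.trans c2) c2 (hfA0 n) (hfB0 n) (by nlinarith [m2]))
  · -- reverse
    intro hyp α X d hne hex
    obtain ⟨K, ⟨hnn, hzero, hsym⟩, hK, htri⟩ := hex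
    have hsemi' : IsSemimetricOn X (fun x y => f (d x y)) := by
      refine ⟨fun x hx y hy => hf _ (hnn x hx y hy), fun x hx y hy => ?_,
        fun x hx y hy => by simp only [hsym x hx y hy]⟩
      exact (hamen _ (hnn x hx y hy)).trans (hzero x hx y hy)
    refine ⟨hsemi', ?_⟩
    obtain ⟨K₂, hK₂, hforms⟩ := hyp K hK
    refine ⟨K₂, hsemi', hK₂, ?_⟩
    intro x hx y hy z hz
    have h1 : d x z ≤ K * d x y + d y z := htri x hx y hy z hz
    have h2 : d x z ≤ K * d y z + d x y := by
      have := htri z hz y hy x hx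
      rw [hsym z hz x hx, hsym z hz y hy, hsym y hy x hx] at this; linarith
    have h3 : d x y ≤ K * d x z + d y z := by
      have := htri x hx z hz y hy
      rw [hsym z hz y hy] at this; linarith
    have h4 : d x y ≤ K * d y z + d x z := by
      have := htri y hy z hz x hx
      rw [hsym y hy x hx, hsym z hz x hx] at this; linarith
    have h5 : d y z ≤ K * d x y + d x z := by
      have := htri y hy x hx z hz
      rw [hsym y hy x hx] at this; linarith
    have h6 : d y z ≤ K * d x z + d x y := by
      have := htri z hz x hx y hy
      rw [hsym z hz y hy, hsym z hz x hx] at this; linarith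
    exact SBP_key_rev f hK₂ h1 h2 h3 h4 h5 h6
      (hnn x hx y hy) (hnn y hy z hz) (hnn x hx z hz) hforms
end

section
/- Let X₁ and X₂ be disjoint nonempty sets and let d₁, d₂ be semimetrics on X₁, X₂ respectively satisfying the K₁-rpi and K₂-rpi with K₁, K₂ ≥ 1, and with finite diameters r₁ := diam_{d₁}(X₁) < ∞ and r₂ := diam_{d₂}(X₂) < ∞ (with max{r₁,r₂} > 0). Then there exists a semimetric d on X := X₁ ∪ X₂ extending both d₁ and d₂ which satisfies the K-rpi for K := max{K₁, K₂} and has diam_d(X) = max{r₁, r₂}. (The extension can be taken to be d(x,y) = max{r₁,r₂}/(2K) whenever x, y lie in different components.) -/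
/-- Helper: along a chain inside `X₁ ∪ X₂` going from a point of `X₁` to a
point of `X₂`, there is an edge crossing from `X₁` to `X₂`. -/
lemma exists_cross_edge {α : Type} {X₁ X₂ : Set α} (hdisj : Disjoint X₁ X₂)
    (x : ℕ → α) :
    ∀ b a : ℕ, a ≤ b → (∀ i, a ≤ i → i ≤ b → x i ∈ X₁ ∪ X₂) →
      x a ∈ X₁ → x b ∈ X₂ →
      ∃ i, a ≤ i ∧ i < b ∧ x i ∈ X₁ ∧ x (i + 1) ∈ X₂ := by
  intro b
  induction b with
  | zero =>
    intro a hab hU ha hb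
    have : a = 0 := Nat.le_zero.mp hab
    subst this
    exact absurd hb (Set.disjoint_left.mp hdisj ha)
  | succ b ih =>
    intro a hab hU ha hb
    have hab' : a ≤ b := by
      rcases Nat.lt_succ_iff_lt_or_eq.mp (Nat.lt_succ_of_le hab) with h | h
      · omega
      · subst h; exact absurd hb (Set.disjoint_left.mp hdisj ha)
    by_cases hb1 : x b ∈ X₁
    · exact ⟨b, hab', Nat.lt_succ_self b, hb1, hb⟩
    · have hb2 : x b ∈ X₂ := (hU b hab' (Nat.le_succ b)).resolve_left hb1
      obtain ⟨i, h1, h2, h3, h4⟩ :=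
        ih a hab' (fun i hi hi' => hU i hi (hi'.trans (Nat.le_succ b))) ha hb2
      exact ⟨i, h1, h2.trans (Nat.lt_succ_self b), h3, h4⟩

/-- Concatenation lemma for semimetric spaces satisfying the
relaxed polygonal inequality. -/
theorem concatenation_rpi {α : Type} (X₁ X₂ : Set α) (d₁ d₂ : α → α → ℝ)
    (K₁ K₂ : ℝ) (hK₁ : 1 ≤ K₁) (hK₂ : 1 ≤ K₂)
    (hne₁ : X₁.Nonempty) (hne₂ : X₂.Nonempty) (hdisj : Disjoint X₁ X₂)
    (h₁ : IsSemimetricOn X₁ d₁) (h₂ : IsSemimetricOn X₂ d₂)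
    (hp₁ : SatisfiesRPI X₁ d₁ K₁) (hp₂ : SatisfiesRPI X₂ d₂ K₂)
    (hb₁ : BddAbove (distSet X₁ d₁)) (hb₂ : BddAbove (distSet X₂ d₂))
    (hrpos : 0 < max (sSup (distSet X₁ d₁)) (sSup (distSet X₂ d₂))) :
    ∃ d : α → α → ℝ,
      (∀ x ∈ X₁, ∀ y ∈ X₁, d x y = d₁ x y) ∧
      (∀ x ∈ X₂, ∀ y ∈ X₂, d x y = d₂ x y) ∧
      (∀ x ∈ X₁, ∀ y ∈ X₂,
        d x y = max (sSup (distSet X₁ d₁)) (sSup (distSet X₂ d₂)) / (2 * max K₁ K₂)) ∧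
      IsSemimetricOn (X₁ ∪ X₂) d ∧
      SatisfiesRPI (X₁ ∪ X₂) d (max K₁ K₂) ∧
      sSup (distSet (X₁ ∪ X₂) d) = max (sSup (distSet X₁ d₁)) (sSup (distSet X₂ d₂)) := by
  classical
  set s₁ := sSup (distSet X₁ d₁) with hs₁
  set s₂ := sSup (distSet X₂ d₂) with hs₂
  set r := max s₁ s₂ with hrdef
  set K := max K₁ K₂ with hKdef
  have hK : 1 ≤ K := le_trans hK₁ (le_max_left _ _)
  have hKpos : 0 < K := lt_of_lt_of_le one_pos hK
  have h2K : (0:ℝ) < 2 * K := by linarith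
  set δ := r / (2 * K) with hδdef
  have hδpos : 0 < δ := div_pos hrpos h2K
  have hKδ : K * (δ + δ) = r := by
    rw [hδdef]; field_simp; ring
  have hn1 : ∀ x ∈ X₂, x ∉ X₁ := fun x hx => Set.disjoint_right.mp hdisj hx
  have hn2 : ∀ x ∈ X₁, x ∉ X₂ := fun x hx => Set.disjoint_left.mp hdisj hx
  set d : α → α → ℝ := fun x y =>
    if x ∈ X₁ ∧ y ∈ X₁ then d₁ x y else if x ∈ X₂ ∧ y ∈ X₂ then d₂ x y else δ
    with hddef
  have hd11 : ∀ x ∈ X₁, ∀ y ∈ X₁, d x y = d₁ x y := by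
    intro x hx y hy; simp only [hddef]; rw [if_pos ⟨hx, hy⟩]
  have hd22 : ∀ x ∈ X₂, ∀ y ∈ X₂, d x y = d₂ x y := by
    intro x hx y hy; simp only [hddef]
    rw [if_neg (fun h => hn1 x hx h.1), if_pos ⟨hx, hy⟩]
  have hd12 : ∀ x ∈ X₁, ∀ y ∈ X₂, d x y = δ := by
    intro x hx y hy; simp only [hddef]
    rw [if_neg (fun h => hn1 y hy h.2), if_neg (fun h => hn2 x hx h.1)]
  have hd21 : ∀ x ∈ X₂, ∀ y ∈ X₁, d x y = δ := by
    intro x hx y hy; simp only [hddef]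
    rw [if_neg (fun h => hn1 x hx h.1), if_neg (fun h => hn2 y hy h.2)]
  have hd1le : ∀ x ∈ X₁, ∀ y ∈ X₁, d₁ x y ≤ r :=
    fun x hx y hy => le_trans (le_csSup hb₁ ⟨x, hx, y, hy, rfl⟩) (le_max_left _ _)
  have hd2le : ∀ x ∈ X₂, ∀ y ∈ X₂, d₂ x y ≤ r :=
    fun x hx y hy => le_trans (le_csSup hb₂ ⟨x, hx, y, hy, rfl⟩) (le_max_right _ _)
  have hδler : δ ≤ r := by
    rw [hδdef]; exact div_le_self hrpos.le (by linarith)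
  have hsemi : IsSemimetricOn (X₁ ∪ X₂) d := by
    refine ⟨?_, ?_, ?_⟩
    · rintro x (hx | hx) y (hy | hy)
      · rw [hd11 x hx y hy]; exact h₁.1 x hx y hy
      · rw [hd12 x hx y hy]; exact hδpos.le
      · rw [hd21 x hx y hy]; exact hδpos.le
      · rw [hd22 x hx y hy]; exact h₂.1 x hx y hy
    · rintro x (hx | hx) y (hy | hy)
      · rw [hd11 x hx y hy]; exact h₁.2.1 x hx y hy
      · rw [hd12 x hx y hy]
        exact ⟨fun h => absurd h hδpos.ne', fun h => absurd (h ▸ hx) (hn1 y hy)⟩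
      · rw [hd21 x hx y hy]
        exact ⟨fun h => absurd h hδpos.ne', fun h => absurd (h ▸ hx) (hn2 y hy)⟩
      · rw [hd22 x hx y hy]; exact h₂.2.1 x hx y hy
    · rintro x (hx | hx) y (hy | hy)
      · rw [hd11 x hx y hy, hd11 y hy x hx]; exact h₁.2.2 x hx y hy
      · rw [hd12 x hx y hy, hd21 y hy x hx]
      · rw [hd21 x hx y hy, hd12 y hy x hx]
      · rw [hd22 x hx y hy, hd22 y hy x hx]; exact h₂.2.2 x hx y hy
  have hdnn : ∀ x ∈ X₁ ∪ X₂, ∀ y ∈ X₁ ∪ X₂, 0 ≤ d x y := hsemi.1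
  have hrpi : SatisfiesRPI (X₁ ∪ X₂) d K := by
    intro n x hx
    have hedge_nn : ∀ i ∈ Finset.range n, 0 ≤ d (x i) (x (i + 1)) := by
      intro i hi
      have hi' := Finset.mem_range.mp hi
      exact hdnn _ (hx i (by omega)) _ (hx (i + 1) (by omega))
    have hsum_nn : 0 ≤ ∑ i ∈ Finset.range n, d (x i) (x (i + 1)) :=
      Finset.sum_nonneg hedge_nn
    have hsingle : ∀ i < n, d (x i) (x (i + 1)) = δ →
        δ ≤ ∑ j ∈ Finset.range n, d (x j) (x (j + 1)) := by
      intro i hi he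
      calc δ = d (x i) (x (i + 1)) := he.symm
        _ ≤ _ := Finset.single_le_sum hedge_nn (Finset.mem_range.mpr hi)
    have hUswap : ∀ i, i ≤ n → x i ∈ X₂ ∪ X₁ := by
      intro i hi; rcases hx i hi with h | h
      exacts [Or.inr h, Or.inl h]
    rcases hx 0 (Nat.zero_le n) with h0 | h0 <;> rcases hx n le_rfl with hn | hn
    · -- both endpoints in X₁
      by_cases hall : ∀ i ≤ n, x i ∈ X₁
      · have hsum : ∑ i ∈ Finset.range n, d (x i) (x (i + 1))
            = ∑ i ∈ Finset.range n, d₁ (x i) (x (i + 1)) := by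
          refine Finset.sum_congr rfl fun i hi => ?_
          have hi' := Finset.mem_range.mp hi
          exact hd11 _ (hall i (by omega)) _ (hall (i + 1) (by omega))
        rw [hd11 _ h0 _ hn, hsum]
        calc d₁ (x 0) (x n) ≤ K₁ * ∑ i ∈ Finset.range n, d₁ (x i) (x (i + 1)) :=
              hp₁ n x hall
          _ ≤ K * ∑ i ∈ Finset.range n, d₁ (x i) (x (i + 1)) := by
              apply mul_le_mul_of_nonneg_right (le_max_left _ _)
              rw [← hsum]; exact hsum_nn
      · push_neg at hall
        obtain ⟨j, hjn, hj1⟩ := hall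
        have hj2 : x j ∈ X₂ := (hx j hjn).resolve_left hj1
        obtain ⟨i₁, _, hi₁j, hia, hib⟩ :=
          exists_cross_edge hdisj x j 0 (Nat.zero_le j)
            (fun i _ hi' => hx i (hi'.trans hjn)) h0 hj2
        obtain ⟨i₂, hji₂, hi₂n, hic, hid⟩ :=
          exists_cross_edge hdisj.symm x n j hjn
            (fun i _ hi' => hUswap i hi') hj2 hn
        have hne : i₁ ≠ i₂ := by omega
        have hpair : ({i₁, i₂} : Finset ℕ) ⊆ Finset.range n := by
          intro t ht
          simp only [Finset.mem_insert, Finset.mem_singleton] at ht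
          rcases ht with rfl | rfl <;> exact Finset.mem_range.mpr (by omega)
        have hsumge : δ + δ ≤ ∑ i ∈ Finset.range n, d (x i) (x (i + 1)) := by
          have h := Finset.sum_le_sum_of_subset_of_nonneg hpair
            (fun i hi _ => hedge_nn i hi)
          rwa [Finset.sum_pair hne, hd12 _ hia _ hib, hd21 _ hic _ hid] at h
        rw [hd11 _ h0 _ hn]
        calc d₁ (x 0) (x n) ≤ r := hd1le _ h0 _ hn
          _ = K * (δ + δ) := hKδ.symm
          _ ≤ K * ∑ i ∈ Finset.range n, d (x i) (x (i + 1)) :=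
              mul_le_mul_of_nonneg_left hsumge hKpos.le
    · -- x 0 ∈ X₁, x n ∈ X₂
      obtain ⟨i, _, hin, hia, hib⟩ :=
        exists_cross_edge hdisj x n 0 (Nat.zero_le n) (fun i _ hi' => hx i hi') h0 hn
      rw [hd12 _ h0 _ hn]
      calc δ ≤ ∑ j ∈ Finset.range n, d (x j) (x (j + 1)) :=
            hsingle i hin (hd12 _ hia _ hib)
        _ ≤ K * ∑ j ∈ Finset.range n, d (x j) (x (j + 1)) :=
            le_mul_of_one_le_left hsum_nn hK
    · -- x 0 ∈ X₂, x n ∈ X₁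
      obtain ⟨i, _, hin, hia, hib⟩ :=
        exists_cross_edge hdisj.symm x n 0 (Nat.zero_le n) (fun i _ hi' => hUswap i hi') h0 hn
      rw [hd21 _ h0 _ hn]
      calc δ ≤ ∑ j ∈ Finset.range n, d (x j) (x (j + 1)) :=
            hsingle i hin (hd21 _ hia _ hib)
        _ ≤ K * ∑ j ∈ Finset.range n, d (x j) (x (j + 1)) :=
            le_mul_of_one_le_left hsum_nn hK
    · -- both endpoints in X₂
      by_cases hall : ∀ i ≤ n, x i ∈ X₂
      · have hsum : ∑ i ∈ Finset.range n, d (x i) (x (i + 1))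
            = ∑ i ∈ Finset.range n, d₂ (x i) (x (i + 1)) := by
          refine Finset.sum_congr rfl fun i hi => ?_
          have hi' := Finset.mem_range.mp hi
          exact hd22 _ (hall i (by omega)) _ (hall (i + 1) (by omega))
        rw [hd22 _ h0 _ hn, hsum]
        calc d₂ (x 0) (x n) ≤ K₂ * ∑ i ∈ Finset.range n, d₂ (x i) (x (i + 1)) :=
              hp₂ n x hall
          _ ≤ K * ∑ i ∈ Finset.range n, d₂ (x i) (x (i + 1)) := by
              apply mul_le_mul_of_nonneg_right (le_max_right _ _)
              rw [← hsum]; exact hsum_nn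
      · push_neg at hall
        obtain ⟨j, hjn, hj2⟩ := hall
        have hj1 : x j ∈ X₁ := (hx j hjn).resolve_right hj2
        obtain ⟨i₁, _, hi₁j, hia, hib⟩ :=
          exists_cross_edge hdisj.symm x j 0 (Nat.zero_le j)
            (fun i _ hi' => hUswap i (hi'.trans hjn)) h0 hj1
        obtain ⟨i₂, hji₂, hi₂n, hic, hid⟩ :=
          exists_cross_edge hdisj x n j hjn
            (fun i _ hi' => hx i hi') hj1 hn
        have hne : i₁ ≠ i₂ := by omega
        have hpair : ({i₁, i₂} : Finset ℕ) ⊆ Finset.range n := by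
          intro t ht
          simp only [Finset.mem_insert, Finset.mem_singleton] at ht
          rcases ht with rfl | rfl <;> exact Finset.mem_range.mpr (by omega)
        have hsumge : δ + δ ≤ ∑ i ∈ Finset.range n, d (x i) (x (i + 1)) := by
          have h := Finset.sum_le_sum_of_subset_of_nonneg hpair
            (fun i hi _ => hedge_nn i hi)
          rwa [Finset.sum_pair hne, hd21 _ hia _ hib, hd12 _ hic _ hid] at h
        rw [hd22 _ h0 _ hn]
        calc d₂ (x 0) (x n) ≤ r := hd2le _ h0 _ hn
          _ = K * (δ + δ) := hKδ.symm
          _ ≤ K * ∑ i ∈ Finset.range n, d (x i) (x (i + 1)) :=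
              mul_le_mul_of_nonneg_left hsumge hKpos.le
  have hDne : (distSet (X₁ ∪ X₂) d).Nonempty := by
    obtain ⟨a, ha⟩ := hne₁
    exact ⟨d a a, a, Or.inl ha, a, Or.inl ha, rfl⟩
  have hbdd : ∀ v ∈ distSet (X₁ ∪ X₂) d, v ≤ r := by
    rintro v ⟨u, hu, w, hw, rfl⟩
    rcases hu with hu | hu <;> rcases hw with hw | hw
    · rw [hd11 _ hu _ hw]; exact hd1le _ hu _ hw
    · rw [hd12 _ hu _ hw]; exact hδler
    · rw [hd21 _ hu _ hw]; exact hδler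
    · rw [hd22 _ hu _ hw]; exact hd2le _ hu _ hw
  have hsup_le : sSup (distSet (X₁ ∪ X₂) d) ≤ r := csSup_le hDne hbdd
  have hBdd : BddAbove (distSet (X₁ ∪ X₂) d) := ⟨r, hbdd⟩
  have h1sub : distSet X₁ d₁ ⊆ distSet (X₁ ∪ X₂) d := by
    rintro v ⟨u, hu, w, hw, rfl⟩
    exact ⟨u, Or.inl hu, w, Or.inl hw, hd11 _ hu _ hw⟩
  have h2sub : distSet X₂ d₂ ⊆ distSet (X₁ ∪ X₂) d := by
    rintro v ⟨u, hu, w, hw, rfl⟩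
    exact ⟨u, Or.inr hu, w, Or.inr hw, hd22 _ hu _ hw⟩
  have hne1' : (distSet X₁ d₁).Nonempty := by
    obtain ⟨a, ha⟩ := hne₁; exact ⟨d₁ a a, a, ha, a, ha, rfl⟩
  have hne2' : (distSet X₂ d₂).Nonempty := by
    obtain ⟨a, ha⟩ := hne₂; exact ⟨d₂ a a, a, ha, a, ha, rfl⟩
  have hle_sup : r ≤ sSup (distSet (X₁ ∪ X₂) d) := by
    rw [hrdef]
    exact max_le (csSup_le_csSup hBdd hne1' h1sub) (csSup_le_csSup hBdd hne2' h2sub)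
  exact ⟨d, hd11, hd22, fun x hx y hy => hd12 x hx y hy, hsemi, hrpi,
    le_antisymm hsup_le hle_sup⟩
end
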